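/- arXiv:2108.07160 — 9 statements merged into one kernel-verified Lean document; each statement's English description precedes it below -/
import Mathlib

section
/- If G is a tree, then a vertex u of G is avoidable if and only if u is a leaf of G (i.e., has degree at most 1). -/
open SimpleGraph

/-- The closed neighborhood `N[u]` of a vertex. -/
def closedNbhd {V : Type*} (G : SimpleGraph V) (u : V) : Set V :=
  insert u (G.neighborSet u)

/-- A vertex `u` is avoidable if every pair of distinct neighbors `x, y` of `u`
lies in the same connected component of `G − (N[u] \ {x, y})`, i.e. there is a
walk from `x` to `y` all of whose vertices avoid `N[u] \ {x, y}`. -/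
def Avoidable {V : Type*} (G : SimpleGraph V) (u : V) : Prop :=
  ∀ x y : V, G.Adj u x → G.Adj u y → x ≠ y →
    ∃ p : G.Walk x y, ∀ v ∈ p.support, v ∉ closedNbhd G u \ ({x, y} : Set V)

/-! In a forest the only path between two neighbours `x ≠ y` of `u` is `x – u – y`, so every
walk from `x` to `y` meets `u ∈ N[u] \ {x, y}`; a vertex with at most one neighbour is avoidable
vacuously. -/

namespace SimpleGraph

variable {V : Type*} {G : SimpleGraph V}

theorem IsAcyclic.mem_support_of_adj_of_adj (hG : G.IsAcyclic) {u x y : V}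
    (hx : G.Adj u x) (hy : G.Adj u y) (hxy : x ≠ y) (p : G.Walk x y) : u ∈ p.support := by
  classical
  let q : G.Path x y := ⟨.cons hx.symm (.cons hy .nil), by simp [hx.ne', hy.ne, hxy]⟩
  have hq : p.toPath = q := (hG.subsingleton_path x y).elim _ _
  apply p.support_toPath_subset_support
  rw [hq]
  simp [q]

theorem IsAcyclic.neighborSet_subsingleton_of_avoidable (hG : G.IsAcyclic) {u : V}
    (hu : Avoidable G u) : (G.neighborSet u).Subsingleton := by
  intro x hx y hy
  by_contra hxy
  obtain ⟨p, hp⟩ := hu x y hx hy hxy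
  refine hp u (hG.mem_support_of_adj_of_adj hx hy hxy p) ⟨Set.mem_insert u _, ?_⟩
  simp [hx.ne, hy.ne]

theorem avoidable_of_neighborSet_subsingleton {u : V} (hu : (G.neighborSet u).Subsingleton) :
    Avoidable G u :=
  fun _ _ hx hy hxy => absurd (hu hx hy) hxy

theorem degree_le_one_iff_neighborSet_subsingleton (u : V) [Fintype (G.neighborSet u)] :
    G.degree u ≤ 1 ↔ (G.neighborSet u).Subsingleton := by
  simp [← card_neighborFinset_eq_degree, Finset.card_le_one, Set.Subsingleton]

end SimpleGraph

theorem avoidable_iff_leaf_of_isTree_general {V : Type*} [Fintype V]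
    (G : SimpleGraph V) [DecidableRel G.Adj] (hT : G.IsTree) (u : V) :
    Avoidable G u ↔ G.degree u ≤ 1 := by
  rw [degree_le_one_iff_neighborSet_subsingleton]
  exact ⟨hT.isAcyclic.neighborSet_subsingleton_of_avoidable,
    avoidable_of_neighborSet_subsingleton⟩

theorem avoidable_iff_leaf_of_isTree {V : Type*} [Fintype V] [DecidableEq V]
    (G : SimpleGraph V) [DecidableRel G.Adj] (hT : G.IsTree) (u : V) :
    Avoidable G u ↔ G.degree u ≤ 1 :=
  avoidable_iff_leaf_of_isTree_general G hT u
end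

section
/- If a vertex u of a finite simple graph G is not avoidable in G, then u is avoidable in the complement graph of G. -/
/-
If no walk joins the neighbours `a, b` of `u` outside `N_G[u] \ {a, b}`, then `a` and `b` are
non-adjacent in `G` and have no common `G`-neighbour outside `N_G[u]`. Passing to the
complement, `a` and `b` are adjacent, both lie outside `N_{Gᶜ}[u]`, and every `Gᶜ`-neighbour
of `u` (which lies outside `N_G[u]`) is `Gᶜ`-adjacent to `a` or to `b`. So any two
`Gᶜ`-neighbours of `u` are joined through the edge `ab`.
-/
open SimpleGraph

section

variable {V : Type*} {G : SimpleGraph V} {S : Set V} {a b x y z : V}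

def ReachableAvoiding (G : SimpleGraph V) (S : Set V) (x y : V) : Prop :=
  ∃ p : G.Walk x y, ∀ v ∈ p.support, v ∉ S

namespace ReachableAvoiding

theorem of_adj (h : G.Adj x y) (hx : x ∉ S) (hy : y ∉ S) : ReachableAvoiding G S x y := by
  refine ⟨Walk.cons h Walk.nil, fun v hv => ?_⟩
  rcases List.mem_pair.mp (by simpa using hv) with rfl | rfl
  exacts [hx, hy]

theorem symm (h : ReachableAvoiding G S x y) : ReachableAvoiding G S y x := by
  obtain ⟨p, hp⟩ := h
  exact ⟨p.reverse, fun v hv => hp v (by simpa using hv)⟩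

theorem trans (hxy : ReachableAvoiding G S x y) (hyz : ReachableAvoiding G S y z) :
    ReachableAvoiding G S x z := by
  obtain ⟨p, hp⟩ := hxy
  obtain ⟨q, hq⟩ := hyz
  refine ⟨p.append q, fun v hv => ?_⟩
  rcases (Walk.mem_support_append_iff p q).mp hv with hv | hv
  exacts [hp v hv, hq v hv]

theorem of_adj_or_adj (hab : G.Adj a b) (ha : a ∉ S) (hb : b ∉ S) (hz : z ∉ S)
    (h : G.Adj z a ∨ G.Adj z b) : ReachableAvoiding G S z a := by
  rcases h with hza | hzb
  · exact of_adj hza hz ha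
  · exact (of_adj hzb hz hb).trans (of_adj hab.symm hb ha)

end ReachableAvoiding

theorem compl_adj_of_not_reachableAvoiding (h : ¬ ReachableAvoiding G S a b) (hab : a ≠ b)
    (ha : a ∉ S) (hb : b ∉ S) : Gᶜ.Adj a b :=
  ⟨hab, fun hadj => h (.of_adj hadj ha hb)⟩

theorem compl_adj_or_compl_adj_of_not_reachableAvoiding (h : ¬ ReachableAvoiding G S a b)
    (ha : a ∉ S) (hb : b ∉ S) (hz : z ∉ S) (hza : z ≠ a) (hzb : z ≠ b) :
    Gᶜ.Adj z a ∨ Gᶜ.Adj z b := by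
  by_contra! hadj
  have haz : G.Adj a z := (by simpa [hza] using hadj.1 : G.Adj z a).symm
  have hzb' : G.Adj z b := by simpa [hzb] using hadj.2
  exact h ((ReachableAvoiding.of_adj haz ha hz).trans (.of_adj hzb' hz hb))

theorem notMem_closedNbhd_compl_of_adj {u : V} (h : G.Adj u a) : a ∉ closedNbhd Gᶜ u := by
  simp [closedNbhd, h, h.ne.symm]

end

theorem avoidable_compl_of_not_avoidable_general {V : Type*}
    (G : SimpleGraph V) (u : V) (h : ¬ Avoidable G u) : Avoidable Gᶜ u := by
  simp only [Avoidable, not_forall] at h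
  obtain ⟨a, b, hua, hub, hab, hnot⟩ := h
  change ¬ ReachableAvoiding G (closedNbhd G u \ {a, b}) a b at hnot
  have haS : a ∉ closedNbhd G u \ {a, b} := fun h => h.2 (by simp)
  have hbS : b ∉ closedNbhd G u \ {a, b} := fun h => h.2 (by simp)
  have hab' : Gᶜ.Adj a b := compl_adj_of_not_reachableAvoiding hnot hab haS hbS
  intro x y hx hy _
  have reach_a : ∀ z, Gᶜ.Adj u z → z ∉ closedNbhd Gᶜ u \ {x, y} →
      ReachableAvoiding Gᶜ (closedNbhd Gᶜ u \ {x, y}) z a := by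
    intro z huz hzS
    have hz : z ∉ closedNbhd G u := by simpa using notMem_closedNbhd_compl_of_adj huz
    refine .of_adj_or_adj hab' (fun h => notMem_closedNbhd_compl_of_adj hua h.1)
      (fun h => notMem_closedNbhd_compl_of_adj hub h.1) hzS ?_
    exact compl_adj_or_compl_adj_of_not_reachableAvoiding hnot haS hbS (fun h => hz h.1)
      (fun h => huz.2 (h ▸ hua)) (fun h => huz.2 (h ▸ hub))
  exact (reach_a x hx fun h => h.2 (by simp)).trans (reach_a y hy fun h => h.2 (by simp)).symm

theorem avoidable_compl_of_not_avoidable {V : Type*} [Fintype V]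
    (G : SimpleGraph V) (u : V) (h : ¬ Avoidable G u) : Avoidable Gᶜ u :=
  avoidable_compl_of_not_avoidable_general G u h
end

section
/- Let G be a finite simple graph that is not complete, let u be a vertex of G, and let C̄(u) be the vertex set of the connected component of the complement of G containing u. Then u is avoidable in G if and only if |C̄(u)| > 1 and u is avoidable in the induced subgraph G[C̄(u)]. -/
/-!
Every vertex outside the co-component `C` of `u` is adjacent to every vertex of `C`. So a walk
between two neighbours of `u` in `C` that avoids the other neighbours of `u` never leaves `C`;
a neighbour of `u` in `C` and one outside `C` are adjacent; and two neighbours outside `C`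
are joined through a non-neighbour of `u`, which lies in `C` as soon as `C ≠ {u}`. Finally
`C = {u}` makes `u` universal, and a universal vertex is avoidable only in a complete graph.
-/

open SimpleGraph

namespace SimpleGraph

variable {V : Type*} {G : SimpleGraph V} {u : V}

lemma Walk.adj_of_support_subset_pair {x y : V} (p : G.Walk x y) (hxy : x ≠ y)
    (hp : ∀ v ∈ p.support, v = x ∨ v = y) : G.Adj x y := by
  have hsnd : G.Adj x p.snd := p.adj_snd (Walk.not_nil_of_ne hxy)
  rcases hp _ (p.getVert_mem_support 1) with h | h
  · exact absurd h hsnd.ne'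
  · exact h ▸ hsnd

lemma Adj.exists_walk_avoiding {x y : V} (h : G.Adj x y) (S : Set V) :
    ∃ p : G.Walk x y, ∀ v ∈ p.support, v ∉ S \ {x, y} :=
  ⟨h.toWalk, by simp⟩

lemma closedNbhd_induce (s : Set V) (w : s) :
    closedNbhd (G.induce s) w = Subtype.val ⁻¹' closedNbhd G w := by
  ext v
  simp [closedNbhd, Subtype.ext_iff]

lemma avoidable_induce_iff {s : Set V} (hu : u ∈ s) :
    Avoidable (G.induce s) ⟨u, hu⟩ ↔
      ∀ x ∈ s, ∀ y ∈ s, G.Adj u x → G.Adj u y → x ≠ y →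
        ∃ p : G.Walk x y, ∀ v ∈ p.support, v ∈ s ∧ v ∉ closedNbhd G u \ {x, y} := by
  simp only [Avoidable, closedNbhd_induce]
  constructor
  · intro hA x hx y hy hux huy hxy
    obtain ⟨q, hq⟩ := hA ⟨x, hx⟩ ⟨y, hy⟩ (by simpa) (by simpa) (by simpa)
    obtain ⟨p, hp⟩ : ∃ p : G.Walk x y, p.support = q.support.map Subtype.val :=
      ⟨q.map (Embedding.induce s).toHom, Walk.support_map _ q⟩
    refine ⟨p, ?_⟩
    simp only [hp, List.mem_map]
    rintro _ ⟨v, hv, rfl⟩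
    exact ⟨v.2, by simpa [Subtype.ext_iff] using hq v hv⟩
  · rintro hA ⟨x, hx⟩ ⟨y, hy⟩ hux huy hxy
    obtain ⟨p, hp⟩ := hA x hx y hy (by simpa using hux) (by simpa using huy)
      (by simpa [Subtype.ext_iff] using hxy)
    refine ⟨p.induce s fun v hv => (hp v hv).1, ?_⟩
    simp only [Walk.support_induce, List.mem_attachWith]
    rintro ⟨v, hvs⟩ hv
    simpa [Subtype.ext_iff] using (hp v hv).2

lemma eq_top_of_avoidable_of_forall_adj (hA : Avoidable G u)
    (hu : ∀ v, v ≠ u → G.Adj u v) : G = ⊤ := by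
  ext x y
  refine ⟨Adj.ne, fun hxy => ?_⟩
  by_cases hx : x = u
  · exact hx ▸ hu y (hx ▸ hxy).symm
  by_cases hy : y = u
  · exact (hy ▸ hu x (hy ▸ hxy)).symm
  obtain ⟨p, hp⟩ := hA x y (hu x hx) (hu y hy) hxy
  refine p.adj_of_support_subset_pair hxy fun v hv => ?_
  by_contra hvxy
  refine hp v hv ⟨?_, by simpa using hvxy⟩
  by_cases hvu : v = u
  · exact hvu ▸ Set.mem_insert v _
  · exact Set.mem_insert_of_mem u (hu v hvu)

lemma adj_of_reachable_compl_of_not_reachable_compl {c v : V} (hc : Gᶜ.Reachable u c)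
    (hv : ¬Gᶜ.Reachable u v) : G.Adj c v := by
  by_contra hcv
  have hne : c ≠ v := by rintro rfl; exact hv hc
  exact hv (hc.trans ((compl_adj G c v).2 ⟨hne, hcv⟩).reachable)

lemma nontrivial_cocomponent_of_avoidable (hG : G ≠ ⊤) (hA : Avoidable G u) :
    {v | Gᶜ.Reachable u v}.Nontrivial := by
  by_contra htriv
  refine hG (eq_top_of_avoidable_of_forall_adj hA fun v hvu => ?_)
  refine adj_of_reachable_compl_of_not_reachable_compl (Reachable.refl u) fun huv => hvu ?_
  exact Set.not_nontrivial_iff.1 htriv huv (Reachable.refl u)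

lemma avoidable_induce_cocomponent_of_avoidable (hA : Avoidable G u) :
    Avoidable (G.induce {v | Gᶜ.Reachable u v}) ⟨u, Reachable.refl u⟩ := by
  rw [avoidable_induce_iff]
  intro x hx y hy hux huy hxy
  obtain ⟨p, hp⟩ := hA x y hux huy hxy
  refine ⟨p, fun v hv => ⟨?_, hp v hv⟩⟩
  -- a vertex outside the co-component is a neighbour of `u` other than `x` and `y`
  by_contra hvC
  refine hp v hv ⟨Set.mem_insert_of_mem u ?_, ?_⟩
  · exact adj_of_reachable_compl_of_not_reachable_compl (Reachable.refl u) hvC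
  · rintro (rfl | rfl) <;> contradiction

lemma avoidable_of_avoidable_induce_cocomponent (hnt : {v | Gᶜ.Reachable u v}.Nontrivial)
    (hA : Avoidable (G.induce {v | Gᶜ.Reachable u v}) ⟨u, Reachable.refl u⟩) :
    Avoidable G u := by
  rw [avoidable_induce_iff] at hA
  intro x y hux huy hxy
  by_cases hx : Gᶜ.Reachable u x <;> by_cases hy : Gᶜ.Reachable u y
  · obtain ⟨p, hp⟩ := hA x hx y hy hux huy hxy
    exact ⟨p, fun v hv => (hp v hv).2⟩
  · exact (adj_of_reachable_compl_of_not_reachable_compl hx hy).exists_walk_avoiding _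
  · exact (adj_of_reachable_compl_of_not_reachable_compl hy hx).symm.exists_walk_avoiding _
  · obtain ⟨w, huw⟩ : ∃ w, Gᶜ.Adj u w := by
      obtain ⟨c, ⟨p⟩, hcu⟩ := hnt.exists_ne u
      exact ⟨p.snd, p.adj_snd (Walk.not_nil_of_ne hcu.symm)⟩
    have hwx := adj_of_reachable_compl_of_not_reachable_compl huw.reachable hx
    have hwy := adj_of_reachable_compl_of_not_reachable_compl huw.reachable hy
    refine ⟨.cons hwx.symm hwy.toWalk, fun v hv ⟨hvN, hvxy⟩ => ?_⟩
    simp only [Walk.support_cons, Adj.toWalk, Walk.support_nil, List.mem_cons,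
      List.not_mem_nil, or_false] at hv
    rcases hv with rfl | rfl | rfl
    · exact hvxy (Set.mem_insert v _)
    · exact huw.2 (hvN.resolve_left huw.ne.symm)
    · exact hvxy (Set.mem_insert_of_mem x rfl)

end SimpleGraph

theorem avoidable_iff_avoidable_cocomponent_general {V : Type*}
    (G : SimpleGraph V) (hG : G ≠ ⊤) (u : V) :
    Avoidable G u ↔
      ({v | Gᶜ.Reachable u v} : Set V).Nontrivial ∧
        Avoidable (G.induce {v | Gᶜ.Reachable u v}) ⟨u, Reachable.refl u⟩ :=
  ⟨fun hA => ⟨nontrivial_cocomponent_of_avoidable hG hA,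
      avoidable_induce_cocomponent_of_avoidable hA⟩,
    fun ⟨hnt, hA⟩ => avoidable_of_avoidable_induce_cocomponent hnt hA⟩

theorem avoidable_iff_avoidable_cocomponent {V : Type*} [Fintype V]
    (G : SimpleGraph V) (hG : G ≠ ⊤) (u : V) :
    Avoidable G u ↔
      ({v | Gᶜ.Reachable u v} : Set V).Nontrivial ∧
        Avoidable (G.induce {v | Gᶜ.Reachable u v}) ⟨u, Reachable.refl u⟩ :=
  avoidable_iff_avoidable_cocomponent_general G hG u
end

section
/- Let G be a chordal finite simple graph. Then a vertex u of G is avoidable if and only if u is simplicial. -/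
open SimpleGraph

/-- A vertex is simplicial if its neighborhood induces a clique. -/
def Simplicial {V : Type*} (G : SimpleGraph V) (u : V) : Prop :=
  ∀ x y : V, G.Adj u x → G.Adj u y → x ≠ y → G.Adj x y

/-- A graph is chordal if it contains no induced cycle of length at least 4. -/
def Chordal {V : Type*} (H : SimpleGraph V) : Prop :=
  ∀ n : ℕ, 4 ≤ n → IsEmpty (cycleGraph n ↪g H)

/-! If `u` is simplicial, two neighbours `x, y` are joined by the edge `xy`, which avoids the rest of
`N[u]`. Conversely, suppose `u` is avoidable and has non-adjacent neighbours `x, y`. A shortest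
`x`–`y` path in `G − (N[u] \ {x, y})` is chordless, since it is a geodesic of an induced subgraph,
and only its endpoints are adjacent to `u`; closing it up through `u` gives an induced cycle of
length at least `4`, which a chordal graph does not have. -/

lemma Fin.val_sub_eq_one_iff {n : ℕ} (a b : Fin (n + 2)) :
    (a - b).val = 1 ↔ a.val = b.val + 1 ∨ a.val = 0 ∧ b.val = n + 1 := by
  have := a.isLt
  rcases le_or_gt b a with h | h
  · rw [Fin.sub_val_of_le h]
    omega
  · rw [Fin.coe_sub_iff_lt.2 h]
    omega

lemma cycleGraph_adj_zero_succ {n : ℕ} (i : Fin (n + 1)) :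
    (cycleGraph (n + 2)).Adj 0 i.succ ↔ i = 0 ∨ i = Fin.last n := by
  simp only [cycleGraph_adj', Fin.val_sub_eq_one_iff, Fin.ext_iff, Fin.val_succ, Fin.val_zero,
    Fin.val_last, true_and]
  omega

lemma cycleGraph_adj_succ_succ {n : ℕ} (i j : Fin (n + 1)) :
    (cycleGraph (n + 2)).Adj i.succ j.succ ↔ (pathGraph (n + 1)).Adj i j := by
  simp only [cycleGraph_adj', Fin.val_sub_eq_one_iff, pathGraph_adj, Fin.val_succ]
  omega

namespace SimpleGraph.Embedding
variable {V : Type*} {G : SimpleGraph V} {n : ℕ}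

def cycleGraphOfApex (φ : pathGraph (n + 1) ↪g G) (u : V) (hu : ∀ i, φ i ≠ u)
    (hadj : ∀ i, G.Adj u (φ i) ↔ i = 0 ∨ i = Fin.last n) : cycleGraph (n + 2) ↪g G where
  toFun := Fin.cons u φ
  inj' i j h := by
    cases i using Fin.cases <;> cases j using Fin.cases
    · rfl
    · exact absurd h.symm (hu _)
    · exact absurd h (hu _)
    · simpa using h
  map_rel_iff' {i j} := by
    change G.Adj (Fin.cons (α := fun _ => V) u φ i) (Fin.cons (α := fun _ => V) u φ j) ↔ _
    cases i using Fin.cases <;> cases j using Fin.cases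
    · simp
    · simp [hadj, cycleGraph_adj_zero_succ]
    · rw [G.adj_comm, (cycleGraph _).adj_comm]
      simp [hadj, cycleGraph_adj_zero_succ]
    · simp [cycleGraph_adj_succ_succ]

end SimpleGraph.Embedding

namespace SimpleGraph.Walk
variable {V : Type*} {G : SimpleGraph V} {u v : V}

lemma not_adj_getVert_of_length_eq_dist {p : G.Walk u v} (hp : p.length = G.dist u v) {i j : ℕ}
    (hij : i + 1 < j) (hj : j ≤ p.length) : ¬ G.Adj (p.getVert i) (p.getVert j) := fun h => by
  have := dist_le ((p.take i).append (cons h (p.drop j)))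
  simp only [length_append, take_length, length_cons, drop_length] at this
  omega

lemma adj_getVert_iff_of_length_eq_dist {p : G.Walk u v} (hp : p.length = G.dist u v) {i j : ℕ}
    (hi : i ≤ p.length) (hj : j ≤ p.length) :
    G.Adj (p.getVert i) (p.getVert j) ↔ i + 1 = j ∨ j + 1 = i := by
  refine ⟨fun h => ?_, ?_⟩
  · have hne : i ≠ j := by rintro rfl; exact G.irrefl h
    by_contra hfar
    rcases Nat.lt_or_gt_of_ne hne with hlt | hgt
    · exact not_adj_getVert_of_length_eq_dist hp (by omega) hj h
    · exact not_adj_getVert_of_length_eq_dist hp (by omega) hi h.symm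
  · rintro (rfl | rfl)
    · exact p.adj_getVert_succ (by omega)
    · exact (p.adj_getVert_succ (by omega)).symm

def pathGraphEmbeddingOfLengthEqDist (p : G.Walk u v) (hp : p.length = G.dist u v) :
    pathGraph (p.length + 1) ↪g G where
  toFun i := p.getVert i
  inj' i j h := Fin.ext <| (p.isPath_of_length_eq_dist hp).getVert_injOn
    (Nat.lt_succ_iff.1 i.2) (Nat.lt_succ_iff.1 j.2) h
  map_rel_iff' {i j} := (adj_getVert_iff_of_length_eq_dist hp (Nat.lt_succ_iff.1 i.2)
    (Nat.lt_succ_iff.1 j.2)).trans pathGraph_adj.symm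

end SimpleGraph.Walk

section
variable {V : Type*} {G : SimpleGraph V} {u x y : V}

theorem Simplicial.avoidable (h : Simplicial G u) : Avoidable G u := by
  intro x y hx hy hxy
  refine ⟨(h x y hx hy hxy).toWalk, fun v hv hS => hS.2 ?_⟩
  simpa [Adj.support_toWalk] using hv

theorem Avoidable.exists_cycleGraph_embedding (h : Avoidable G u) (hx : G.Adj u x)
    (hy : G.Adj u y) (hxy : x ≠ y) (hnadj : ¬ G.Adj x y) :
    ∃ n, 4 ≤ n ∧ Nonempty (cycleGraph n ↪g G) := by
  set T : Set V := (closedNbhd G u \ {x, y})ᶜ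
  obtain ⟨p, hp⟩ := h x y hx hy hxy
  have hreach := (p.induce T hp).reachable
  obtain ⟨q, hq⟩ := hreach.exists_walk_length_eq_dist
  have hlen : 1 < q.length := hq ▸ hreach.one_lt_dist_of_ne_of_not_adj (by simpa) hnadj
  let φ := (Embedding.induce T).comp (q.pathGraphEmbeddingOfLengthEqDist hq)
  have hφ : ∀ i, φ i = (q.getVert i : V) := fun _ => rfl
  have hφ0 : φ 0 = x := by simp [hφ]
  have hφlast : φ (Fin.last _) = y := by simp [hφ]
  have hT : ∀ i, φ i ∈ T := fun i => (q.getVert i).2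
  refine ⟨q.length + 2, by omega,
    ⟨φ.cycleGraphOfApex u (fun i hi => ?_) (fun i => ⟨fun hui => ?_, ?_⟩)⟩⟩
  · have hu := hT i
    rw [hi] at hu
    exact hu ⟨Set.mem_insert _ _, by simp [hx.ne, hy.ne]⟩
  · have hend : φ i ∈ ({x, y} : Set V) := by
      by_contra hn
      exact hT i ⟨Set.mem_insert_of_mem _ hui, hn⟩
    rcases hend with hi | hi
    · exact Or.inl (φ.injective (hi.trans hφ0.symm))
    · exact Or.inr (φ.injective (hi.trans hφlast.symm))
  · rintro (rfl | rfl)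
    · rwa [hφ0]
    · rwa [hφlast]

end

theorem avoidable_iff_simplicial_of_chordal_general {V : Type*}
    (G : SimpleGraph V) (hG : Chordal G) (u : V) :
    Avoidable G u ↔ Simplicial G u := by
  refine ⟨fun h x y hx hy hxy => ?_, Simplicial.avoidable⟩
  by_contra hnadj
  obtain ⟨n, hn, ⟨e⟩⟩ := h.exists_cycleGraph_embedding hx hy hxy hnadj
  exact (hG n hn).false e

theorem avoidable_iff_simplicial_of_chordal {V : Type*} [Fintype V]
    (G : SimpleGraph V) (hG : Chordal G) (u : V) :
    Avoidable G u ↔ Simplicial G u :=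
  avoidable_iff_simplicial_of_chordal_general G hG u
end

section
/- A vertex u of a finite simple graph G is avoidable if and only if every vertex x ∈ N(u) protects u, where x protects u means: for every z ∈ N(u) \ {x}, either xz is an edge or there is a path from x to z all of whose internal vertices lie outside N[u]. -/
open SimpleGraph

/-- `x` protects `u`: for every other neighbor `z` of `u`, either `xz` is an
edge or there is a path from `x` to `z` whose internal vertices avoid `N[u]`. -/
def Protects {V : Type*} (G : SimpleGraph V) (x u : V) : Prop :=
  ∀ z : V, G.Adj u z → z ≠ x →
    (G.Adj x z ∨
      ∃ p : G.Walk x z, ∀ v ∈ p.support, v ≠ x → v ≠ z → v ∉ closedNbhd G u)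

theorem Set.notMem_diff_pair_iff {α : Type*} {s : Set α} {v x y : α} :
    v ∉ s \ {x, y} ↔ (v ≠ x → v ≠ y → v ∉ s) := by
  simp only [Set.mem_sdiff, Set.mem_insert_iff, Set.mem_singleton_iff]
  tauto

theorem SimpleGraph.Adj.exists_walk_internal_notMem {V : Type*} {G : SimpleGraph V} {x z : V}
    (h : G.Adj x z) (s : Set V) :
    ∃ p : G.Walk x z, ∀ v ∈ p.support, v ≠ x → v ≠ z → v ∉ s :=
  ⟨h.toWalk, by simp [Adj.toWalk]⟩

theorem avoidable_iff_exists_walk_internal_notMem_closedNbhd {V : Type*} (G : SimpleGraph V)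
    (u : V) :
    Avoidable G u ↔ ∀ x y : V, G.Adj u x → G.Adj u y → x ≠ y →
      ∃ p : G.Walk x y, ∀ v ∈ p.support, v ≠ x → v ≠ y → v ∉ closedNbhd G u := by
  simp only [Avoidable, Set.notMem_diff_pair_iff]

theorem avoidable_iff_all_neighbors_protect_general {V : Type*}
    (G : SimpleGraph V) (u : V) :
    Avoidable G u ↔ ∀ x : V, G.Adj u x → Protects G x u := by
  rw [avoidable_iff_exists_walk_internal_notMem_closedNbhd]
  constructor
  · exact fun h x hx z hz hzx => Or.inr (h x z hx hz hzx.symm)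
  · intro h x y hx hy hxy
    exact (h x hx y hy hxy.symm).elim (·.exists_walk_internal_notMem _) id

theorem avoidable_iff_all_neighbors_protect {V : Type*} [Fintype V]
    (G : SimpleGraph V) (u : V) :
    Avoidable G u ↔ ∀ x : V, G.Adj u x → Protects G x u :=
  avoidable_iff_all_neighbors_protect_general G u
end

section
/- Let G be a finite simple graph, u a vertex, and let G_u be the graph obtained from G by contracting each connected component of G − N[u] into a single vertex (a contracted vertex C is adjacent to exactly the vertices of N(u) having a neighbor in the component). Then u is avoidable in G if and only if u is avoidable in G_u. -/
open SimpleGraph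

/-- The graph `G_u` obtained from `G` by contracting each connected component of
`G − N[u]` into a single vertex. Its vertices are the vertices of `N[u]`
together with one vertex for each connected component of `G − N[u]`; a
contracted vertex is adjacent to exactly the vertices of `N(u)` having a
neighbor in the corresponding component. -/
def contractGraph {V : Type*} (G : SimpleGraph V) (u : V) :
    SimpleGraph ((closedNbhd G u : Set V) ⊕
      (G.induce (closedNbhd G u)ᶜ).ConnectedComponent) where
  Adj a b :=
    match a, b with
    | .inl a, .inl b => G.Adj a b
    | .inl a, .inr c => ∃ w : ((closedNbhd G u)ᶜ : Set V),
        (G.induce (closedNbhd G u)ᶜ).connectedComponentMk w = c ∧ G.Adj a w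
    | .inr c, .inl b => ∃ w : ((closedNbhd G u)ᶜ : Set V),
        (G.induce (closedNbhd G u)ᶜ).connectedComponentMk w = c ∧ G.Adj b w
    | .inr _, .inr _ => False
  symm := ⟨by
    rintro (a | c) (b | d) h
    · exact G.adj_symm h
    · exact h
    · exact h
    · exact h.elim⟩
  loopless := ⟨by
    rintro (a | c) h
    · exact G.irrefl h
    · exact h⟩

/-!
The map `π = contractMap G u` fixes `N[u]` and sends every other vertex to its component of `G − N[u]`.
Along an edge of `G`, `π` either stays put or moves along an edge of `G_u`, so walks of `G`
push forward; conversely every edge of `G_u` is the image of an edge of `G` and the fibres of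
`π` are connected, so walks of `G_u` lift. Since `π` is injective on `N[u]` and maps nothing
else into `N[û]`, a walk avoids `N[u] \ {x, y}` exactly when its image avoids
`N[û] \ {π x, π y}`.
-/

namespace SimpleGraph.Walk

variable {V W : Type*} {G : SimpleGraph V} {H : SimpleGraph W} {f : V → W}

theorem exists_walk_support_subset_map
    (hf : ∀ a b, G.Adj a b → f a = f b ∨ H.Adj (f a) (f b)) {a b : V} (p : G.Walk a b) :
    ∃ q : H.Walk (f a) (f b), q.support ⊆ p.support.map f := by
  induction p with
  | nil => exact ⟨.nil, by simp⟩
  | @cons a c b hac p ih =>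
    obtain ⟨q, hq⟩ := ih
    rcases hf a c hac with heq | hadj
    · refine ⟨q.copy heq.symm rfl, ?_⟩
      rw [support_copy, support_cons, List.map_cons]
      exact List.Subset.trans hq (List.subset_cons_self _ _)
    · refine ⟨.cons hadj q, ?_⟩
      rw [support_cons, support_cons, List.map_cons]
      exact List.cons_subset_cons _ hq

theorem exists_lift
    (hfiber : ∀ v v', f v = f v' → ∃ p : G.Walk v v', ∀ w ∈ p.support, f w = f v)
    (hlift : ∀ z z', H.Adj z z' → ∃ a b, G.Adj a b ∧ f a = z ∧ f b = z')
    {z z' : W} (q : H.Walk z z') {v v' : V} (hv : f v = z) (hv' : f v' = z') :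
    ∃ p : G.Walk v v', ∀ w ∈ p.support, f w ∈ q.support := by
  induction q generalizing v with
  | nil =>
    obtain ⟨p, hp⟩ := hfiber v v' (hv.trans hv'.symm)
    exact ⟨p, fun w hw => by simp [hp w hw, hv]⟩
  | @cons z z₁ z' hzz₁ q ih =>
    obtain ⟨a, b, hab, rfl, rfl⟩ := hlift z z₁ hzz₁
    obtain ⟨r, hr⟩ := hfiber v a hv
    obtain ⟨p, hp⟩ := ih rfl hv'
    refine ⟨r.append (.cons hab p), fun w hw => ?_⟩
    rw [support_append, support_cons, List.tail_cons, List.mem_append] at hw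
    rcases hw with hw | hw
    · simp [hr w hw, hv]
    · exact List.mem_cons_of_mem _ (hp w hw)

end SimpleGraph.Walk

section contractGraph

variable {V : Type*} (G : SimpleGraph V) (u : V)

local notation "N[" u "]" => closedNbhd G u

local notation "K" => G.induce (closedNbhd G u)ᶜ

noncomputable def contractMap (v : V) : N[u] ⊕ (K).ConnectedComponent :=
  open Classical in
  if h : v ∈ N[u] then .inl ⟨v, h⟩ else .inr ((K).connectedComponentMk ⟨v, h⟩)

variable {G u}

theorem contractMap_of_mem {v : V} (h : v ∈ N[u]) : contractMap G u v = .inl ⟨v, h⟩ :=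
  dif_pos h

theorem contractMap_of_notMem {v : V} (h : v ∉ N[u]) :
    contractMap G u v = .inr ((K).connectedComponentMk ⟨v, h⟩) :=
  dif_neg h

theorem contractMap_surjective : Function.Surjective (contractMap G u) := by
  rintro (a | c)
  · exact ⟨a, contractMap_of_mem a.2⟩
  · induction c using ConnectedComponent.ind with
    | h w => exact ⟨w, contractMap_of_notMem w.2⟩

theorem contractMap_injOn : Set.InjOn (contractMap G u) N[u] := by
  intro a ha b hb hab
  rw [contractMap_of_mem ha, contractMap_of_mem hb] at hab
  exact congrArg Subtype.val (Sum.inl_injective hab)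

theorem contractMap_eq_contractMap_self_iff {v : V} :
    contractMap G u v = contractMap G u u ↔ v = u := by
  have hu : u ∈ N[u] := Set.mem_insert u _
  by_cases hv : v ∈ N[u]
  · exact contractMap_injOn.eq_iff hv hu
  · rw [contractMap_of_notMem hv, contractMap_of_mem hu]
    exact ⟨fun h => (Sum.inr_ne_inl h).elim, fun h => (hv (h ▸ hu)).elim⟩

theorem contractGraph_adj_contractMap_iff {v : V} :
    (contractGraph G u).Adj (contractMap G u u) (contractMap G u v) ↔ G.Adj u v := by
  have hu : u ∈ N[u] := Set.mem_insert u _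
  by_cases hv : v ∈ N[u]
  · rw [contractMap_of_mem hu, contractMap_of_mem hv]
    exact Iff.rfl
  · rw [contractMap_of_mem hu, contractMap_of_notMem hv]
    exact ⟨fun ⟨w, _, huw⟩ => (w.2 (Set.mem_insert_of_mem _ huw)).elim,
      fun huv => (hv (Set.mem_insert_of_mem _ huv)).elim⟩

theorem contractMap_mem_closedNbhd_iff {v : V} :
    contractMap G u v ∈ closedNbhd (contractGraph G u) (contractMap G u u) ↔ v ∈ N[u] := by
  show _ ∈ insert _ _ ↔ _
  rw [Set.mem_insert_iff, mem_neighborSet, contractGraph_adj_contractMap_iff,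
    contractMap_eq_contractMap_self_iff]
  rfl

theorem contractMap_mem_closedNbhd_diff_iff {x y v : V} (hx : x ∈ N[u]) (hy : y ∈ N[u]) :
    contractMap G u v ∈ closedNbhd (contractGraph G u) (contractMap G u u) \
        {contractMap G u x, contractMap G u y} ↔ v ∈ N[u] \ {x, y} := by
  simp only [Set.mem_sdiff, contractMap_mem_closedNbhd_iff, Set.mem_insert_iff,
    Set.mem_singleton_iff, and_congr_right_iff]
  intro hv
  rw [contractMap_injOn.eq_iff hv hx, contractMap_injOn.eq_iff hv hy]

theorem contractMap_eq_or_adj {a b : V} (hab : G.Adj a b) :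
    contractMap G u a = contractMap G u b ∨
      (contractGraph G u).Adj (contractMap G u a) (contractMap G u b) := by
  by_cases ha : a ∈ N[u] <;> by_cases hb : b ∈ N[u]
  · right; rw [contractMap_of_mem ha, contractMap_of_mem hb]; exact hab
  · right; rw [contractMap_of_mem ha, contractMap_of_notMem hb]; exact ⟨⟨b, hb⟩, rfl, hab⟩
  · right; rw [contractMap_of_notMem ha, contractMap_of_mem hb]; exact ⟨⟨a, ha⟩, rfl, hab.symm⟩
  · left
    rw [contractMap_of_notMem ha, contractMap_of_notMem hb]
    exact congrArg _ (ConnectedComponent.connectedComponentMk_eq_of_adj (G := K) hab)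

theorem exists_adj_of_contractGraph_adj {z z' : N[u] ⊕ (K).ConnectedComponent}
    (h : (contractGraph G u).Adj z z') :
    ∃ a b, G.Adj a b ∧ contractMap G u a = z ∧ contractMap G u b = z' := by
  rcases z with a | c <;> rcases z' with b | d
  · exact ⟨a, b, h, contractMap_of_mem a.2, contractMap_of_mem b.2⟩
  · obtain ⟨w, rfl, haw⟩ := h
    exact ⟨a, w, haw, contractMap_of_mem a.2, contractMap_of_notMem w.2⟩
  · obtain ⟨w, rfl, hbw⟩ := h
    exact ⟨w, b, hbw.symm, contractMap_of_notMem w.2, contractMap_of_mem b.2⟩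
  · exact h.elim

theorem exists_walk_of_contractMap_eq {v v' : V} (h : contractMap G u v = contractMap G u v') :
    ∃ p : G.Walk v v', ∀ w ∈ p.support, contractMap G u w = contractMap G u v := by
  by_cases hv : v ∈ N[u] <;> by_cases hv' : v' ∈ N[u]
  · obtain rfl := contractMap_injOn hv hv' h
    exact ⟨.nil, by simp⟩
  · rw [contractMap_of_mem hv, contractMap_of_notMem hv'] at h
    exact (Sum.inl_ne_inr h).elim
  · rw [contractMap_of_notMem hv, contractMap_of_mem hv'] at h
    exact (Sum.inr_ne_inl h).elim
  · rw [contractMap_of_notMem hv, contractMap_of_notMem hv'] at h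
    obtain ⟨q⟩ := ConnectedComponent.exact (Sum.inr_injective h)
    refine ⟨q.map (Embedding.induce N[u]ᶜ).toHom, fun w hw => ?_⟩
    replace hw : w ∈ (q.map (Embedding.induce N[u]ᶜ).toHom).support := hw
    rw [Walk.support_map, List.mem_map] at hw
    obtain ⟨z, hz, rfl⟩ := hw
    change contractMap G u z = _
    rw [contractMap_of_notMem z.2, contractMap_of_notMem hv]
    classical
    exact congrArg _ (ConnectedComponent.sound (q.takeUntil z hz).reachable.symm)

end contractGraph

theorem avoidable_iff_avoidable_contractGraph_general {V : Type*}
    (G : SimpleGraph V) (u : V) :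
    Avoidable G u ↔
      Avoidable (contractGraph G u) (Sum.inl ⟨u, Set.mem_insert u _⟩) := by
  have mem_of_adj {x : V} (hx : G.Adj u x) : x ∈ closedNbhd G u := Set.mem_insert_of_mem _ hx
  rw [← contractMap_of_mem (Set.mem_insert u _)]
  constructor
  · intro h X Y hX hY hXY
    obtain ⟨x, rfl⟩ := contractMap_surjective X
    obtain ⟨y, rfl⟩ := contractMap_surjective Y
    rw [contractGraph_adj_contractMap_iff] at hX hY
    obtain ⟨p, hp⟩ := h x y hX hY (ne_of_apply_ne _ hXY)
    obtain ⟨q, hq⟩ := p.exists_walk_support_subset_map (fun _ _ => contractMap_eq_or_adj)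
    refine ⟨q, fun z hz => ?_⟩
    obtain ⟨v, hv, rfl⟩ := List.mem_map.1 (hq hz)
    rw [contractMap_mem_closedNbhd_diff_iff (mem_of_adj hX) (mem_of_adj hY)]
    exact hp v hv
  · intro h x y hx hy hxy
    obtain ⟨q, hq⟩ := h _ _ (contractGraph_adj_contractMap_iff.2 hx)
      (contractGraph_adj_contractMap_iff.2 hy)
      (contractMap_injOn.ne (mem_of_adj hx) (mem_of_adj hy) hxy)
    obtain ⟨p, hp⟩ := q.exists_lift (fun _ _ => exists_walk_of_contractMap_eq)
      (fun _ _ => exists_adj_of_contractGraph_adj) rfl rfl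
    exact ⟨p, fun v hv => by
      rw [← contractMap_mem_closedNbhd_diff_iff (mem_of_adj hx) (mem_of_adj hy)]
      exact hq _ (hp v hv)⟩

theorem avoidable_iff_avoidable_contractGraph {V : Type*} [Fintype V]
    (G : SimpleGraph V) (u : V) :
    Avoidable G u ↔
      Avoidable (contractGraph G u) (Sum.inl ⟨u, Set.mem_insert u _⟩) :=
  avoidable_iff_avoidable_contractGraph_general G u
end

section
/- Let G be a finite simple graph, u a vertex, and G_u(X,C) the graph obtained from G by contracting each connected component of G − N[u] into a single vertex, where X = N(u) and C is the set of contracted vertices. Then u is avoidable in G if and only if for every pair of distinct vertices x, y ∈ X, either xy is an edge of G or there exists a contracted vertex c ∈ C adjacent to both x and y in G_u. -/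
open SimpleGraph

/-!
A walk from `x` to `y` whose inner vertices avoid `N[u]` can be shortened to a path;
if it has an inner vertex at all, its inner vertices form a walk inside `G − N[u]` from a
neighbour of `x` to a neighbour of `y`. Conversely, such a walk inside one component of
`G − N[u]`, extended by the two edges at its ends, gives the walk required by avoidability.
-/

namespace SimpleGraph

variable {V : Type*} {G : SimpleGraph V} {s : Set V}

lemma exists_walk_support_subset_of_reachable_induce {a b : s}
    (h : (G.induce s).Reachable a b) : ∃ p : G.Walk a b, ∀ v ∈ p.support, v ∈ s := by
  obtain ⟨q⟩ := h
  refine ⟨q.map (Embedding.induce s).toHom, fun v hv => ?_⟩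
  obtain ⟨z, -, rfl⟩ := List.mem_map.mp (q.support_map (Embedding.induce s).toHom ▸ hv)
  exact z.2

lemma Walk.exists_reachable_induce_adj {a y : V} (q : G.Walk a y) (ha : a ∈ s) (hy : y ∉ s)
    (hq : ∀ v ∈ q.support, v ∈ s ∨ v = y) :
    ∃ w : s, (G.induce s).Reachable ⟨a, ha⟩ w ∧ G.Adj w y := by
  induction q with
  | nil => exact absurd ha hy
  | @cons a b y hab r ih =>
    by_cases hby : b = y
    · subst hby
      exact ⟨⟨a, ha⟩, Reachable.refl _, hab⟩
    · have hb : b ∈ s := (hq b (by simp)).resolve_right hby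
      obtain ⟨w, hbw, hwy⟩ := ih hb hy fun v hv => hq v (by simp [hv])
      exact ⟨w, Adj.reachable (by simpa using hab) |>.trans hbw, hwy⟩

lemma exists_walk_via_iff_adj_or_reachable_induce {x y : V} (hy : y ∉ s) (hxy : x ≠ y) :
    (∃ p : G.Walk x y, ∀ v ∈ p.support, v ∈ s ∨ v = x ∨ v = y) ↔
      G.Adj x y ∨ ∃ w w' : s, (G.induce s).Reachable w w' ∧ G.Adj x w ∧ G.Adj y w' := by
  classical
  constructor
  · rintro ⟨p, hp⟩
    have hpath := p.bypass_isPath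
    have hsupp : ∀ v ∈ p.bypass.support, v ∈ s ∨ v = x ∨ v = y :=
      fun v hv => hp v (p.support_bypass_subset_support hv)
    generalize p.bypass = q at hpath hsupp
    cases q with
    | nil => exact absurd rfl hxy
    | @cons x b y hxb r =>
      by_cases hby : b = y
      · subst hby
        exact .inl hxb
      have hxr : x ∉ r.support := ((Walk.cons_isPath_iff _ _).mp hpath).2
      have hr : ∀ v ∈ r.support, v ∈ s ∨ v = y := fun v hv => by
        rcases hsupp v (by simp [hv]) with hvs | rfl | rfl
        exacts [.inl hvs, absurd hv hxr, .inr rfl]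
      have hb : b ∈ s := (hr b r.start_mem_support).resolve_right hby
      obtain ⟨w', hbw', hw'y⟩ := r.exists_reachable_induce_adj hb hy hr
      exact .inr ⟨⟨b, hb⟩, w', hbw', hxb, hw'y.symm⟩
  · rintro (hxy | ⟨w, w', hww', hxw, hyw'⟩)
    · exact ⟨hxy.toWalk, by simp⟩
    · obtain ⟨q, hq⟩ := exists_walk_support_subset_of_reachable_induce hww'
      refine ⟨.cons hxw (q.concat hyw'.symm), fun v hv => ?_⟩
      simp only [Walk.support_cons, Walk.support_concat, List.mem_cons, List.mem_append,
        List.not_mem_nil, or_false] at hv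
      rcases hv with rfl | hv | rfl
      exacts [.inr (.inl rfl), .inl (hq v hv), .inr (.inr rfl)]

end SimpleGraph

theorem avoidable_iff_common_component_general {V : Type*}
    (G : SimpleGraph V) (u : V) :
    Avoidable G u ↔
      ∀ x y : V, G.Adj u x → G.Adj u y → x ≠ y →
        (G.Adj x y ∨
          ∃ w w' : ((closedNbhd G u)ᶜ : Set V),
            (G.induce (closedNbhd G u)ᶜ).connectedComponentMk w =
              (G.induce (closedNbhd G u)ᶜ).connectedComponentMk w' ∧
            G.Adj x w ∧ G.Adj y w') := by
  simp only [ConnectedComponent.eq]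
  refine forall₄_congr fun x y hx hy => forall_congr' fun hxy => ?_
  have hy' : y ∉ (closedNbhd G u)ᶜ := not_not_intro (Set.mem_insert_of_mem u hy)
  rw [← exists_walk_via_iff_adj_or_reachable_induce hy' hxy]
  refine exists_congr fun p => forall₂_congr fun v _ => ?_
  simp only [Set.mem_sdiff, Set.mem_insert_iff, Set.mem_singleton_iff, Set.mem_compl_iff]
  tauto

/-- `u` is avoidable in `G` iff every two distinct neighbors `x, y` of `u` are
either adjacent in `G` or there is a single connected component of `G − N[u]`
(a contracted vertex of `G_u(X,C)`) containing a neighbor of `x` and a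
neighbor of `y`. -/
theorem avoidable_iff_common_component {V : Type*} [Fintype V]
    (G : SimpleGraph V) (u : V) :
    Avoidable G u ↔
      ∀ x y : V, G.Adj u x → G.Adj u y → x ≠ y →
        (G.Adj x y ∨
          ∃ w w' : ((closedNbhd G u)ᶜ : Set V),
            (G.induce (closedNbhd G u)ᶜ).connectedComponentMk w =
              (G.induce (closedNbhd G u)ᶜ).connectedComponentMk w' ∧
            G.Adj x w ∧ G.Adj y w') :=
  avoidable_iff_common_component_general G u
end

section
/- Let xy be an edge of a finite simple graph G and let B(x,y) = N(x) ∩ N(y). Then xy is an avoidable edge in G if and only if xy is a protected edge in G − B(x,y). -/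
open SimpleGraph

/-- `a, x, y, b` form an induced `P₄` having `xy` as its middle edge
(the adjacency `G.Adj x y` is recorded separately as `xy` being an edge). -/
def IsMiddleP4 {V : Type*} (G : SimpleGraph V) (x y a b : V) : Prop :=
  G.Adj a x ∧ G.Adj y b ∧ ¬ G.Adj a y ∧ ¬ G.Adj x b ∧ ¬ G.Adj a b ∧
    a ≠ y ∧ b ≠ x ∧ a ≠ b

/-- A closed walk is an induced cycle if it is a cycle and every adjacency
between vertices on it is an edge of the cycle. -/
def IsInducedCycle {V : Type*} (G : SimpleGraph V) {v : V} (c : G.Walk v v) : Prop :=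
  c.IsCycle ∧ ∀ a ∈ c.support, ∀ b ∈ c.support, G.Adj a b → s(a, b) ∈ c.edges

/-- An edge `xy` is avoidable if every induced `P₄` `a,x,y,b` with middle edge
`xy` is contained in an induced cycle. -/
def AvoidableEdge {V : Type*} (G : SimpleGraph V) (x y : V) : Prop :=
  ∀ a b : V, IsMiddleP4 G x y a b →
    ∃ (v : V) (c : G.Walk v v), IsInducedCycle G c ∧
      a ∈ c.support ∧ x ∈ c.support ∧ y ∈ c.support ∧ b ∈ c.support

/-- An edge `xy` is protected if between every neighbor of `x` and every
neighbor of `y` there is a path whose internal vertices avoid `N[x] ∪ N[y]`. -/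
def ProtectedEdge {V : Type*} (G : SimpleGraph V) (x y : V) : Prop :=
  ∀ a b : V, G.Adj x a → G.Adj y b →
    ∃ p : G.Walk a b, ∀ v ∈ p.support, v ≠ a → v ≠ b →
      v ∉ (insert x (G.neighborSet x) ∪ insert y (G.neighborSet y) : Set V)

/-!
An induced `P₄` `a, x, y, b` has `a, b ∉ B(x,y)`. Deleting `x` and `y` from an induced cycle
through it leaves an `a`–`b` path whose inner vertices, the cycle being chordless, are neither
`x`, `y` nor adjacent to them; in particular they avoid `B(x,y)`, so the path lives in
`G − B(x,y)`. Conversely, such a path in `G − B(x,y)` shortens to a chordless path, which closes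
with `b, y, x, a` to an induced cycle. For the remaining pairs `a ∈ N(x)`, `b ∈ N(y)` of
`G − B(x,y)`, `a = b` or `a ~ b`, and the path is trivial.
-/

namespace SimpleGraph.Walk

variable {V : Type*} {G : SimpleGraph V}

lemma exists_length_lt_of_adj_getVert {u v : V} (p : G.Walk u v) {i j : ℕ} (hij : i < j)
    (hj : j ≤ p.length) (hadj : G.Adj (p.getVert i) (p.getVert j))
    (hchord : s(p.getVert i, p.getVert j) ∉ p.edges) :
    ∃ q : G.Walk u v, q.length < p.length ∧ q.support ⊆ p.support := by
  obtain rfl | hij := (Nat.succ_le_of_lt hij).eq_or_lt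
  · exact absurd (adj_toSubgraph_iff_mem_edges.1 (p.toSubgraph_adj_getVert (by omega))) hchord
  refine ⟨(p.take i).append (cons hadj (p.drop j)), ?_, ?_⟩
  · simp only [length_append, length_cons, take_length, drop_length]
    omega
  · intro w hw
    simp only [support_append, support_cons, List.tail_cons, List.mem_append, support_take,
      drop_support_eq_support_drop_min] at hw
    exact hw.elim List.mem_of_mem_take List.mem_of_mem_drop

lemma exists_length_lt_of_not_isChordless {u v : V} (p : G.Walk u v) (h : ¬ p.IsChordless) :
    ∃ q : G.Walk u v, q.length < p.length ∧ q.support ⊆ p.support := by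
  simp only [isChordless_iff_forall_mem_edges, not_forall] at h
  obtain ⟨_, _, ha, hb, hadj, hchord⟩ := h
  obtain ⟨i, rfl, hi⟩ := mem_support_iff_exists_getVert.1 ha
  obtain ⟨j, rfl, hj⟩ := mem_support_iff_exists_getVert.1 hb
  rcases lt_trichotomy i j with hij | rfl | hji
  · exact p.exists_length_lt_of_adj_getVert hij hj hadj hchord
  · exact absurd hadj G.irrefl
  · exact p.exists_length_lt_of_adj_getVert hji hi hadj.symm (by rwa [Sym2.eq_swap])

lemma exists_isPath_isChordless_support_subset {u v : V} (p : G.Walk u v) :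
    ∃ q : G.Walk u v, q.IsPath ∧ q.IsChordless ∧ q.support ⊆ p.support := by
  classical
  by_cases h : p.bypass.IsChordless
  · exact ⟨p.bypass, p.bypass_isPath, h, p.support_bypass_subset_support⟩
  · obtain ⟨r, hr, hsub⟩ := p.bypass.exists_length_lt_of_not_isChordless h
    have := p.length_bypass_le_length
    obtain ⟨q, hq, hqc, hsub'⟩ := r.exists_isPath_isChordless_support_subset
    exact ⟨q, hq, hqc, fun _ hw => p.support_bypass_subset_support (hsub (hsub' hw))⟩
termination_by p.length

lemma IsChordless.cons {u v w : V} {p : G.Walk v w} (hp : p.IsChordless) (h : G.Adj u v)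
    (hu : ∀ z ∈ p.support, G.Adj u z → z = v) : (cons h p).IsChordless := by
  rw [isChordless_iff_forall_mem_edges] at hp ⊢
  intro a b ha hb hab
  simp only [support_cons, List.mem_cons, edges_cons] at ha hb ⊢
  rcases ha with rfl | ha <;> rcases hb with rfl | hb
  · exact absurd hab G.irrefl
  · exact .inl (by rw [hu b hb hab])
  · exact .inl (by rw [hu a ha hab.symm, Sym2.eq_swap])
  · exact .inr (hp ha hb hab)

lemma IsCycle.eq_or_eq_of_toSubgraph_adj {u v a b w : V} {c : G.Walk u u} (hc : c.IsCycle)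
    (ha : c.toSubgraph.Adj v a) (hb : c.toSubgraph.Adj v b) (hab : a ≠ b)
    (hw : c.toSubgraph.Adj v w) : w = a ∨ w = b := by
  obtain ⟨s, t, -, hst⟩ := Set.ncard_eq_two.1
    (hc.ncard_neighborSet_toSubgraph_eq_two (mem_support_of_adj_toSubgraph ha))
  have ha' : a ∈ c.toSubgraph.neighborSet v := ha
  have hb' : b ∈ c.toSubgraph.neighborSet v := hb
  have hw' : w ∈ c.toSubgraph.neighborSet v := hw
  rw [hst] at ha' hb' hw'
  simp only [Set.mem_insert_iff, Set.mem_singleton_iff] at ha' hb' hw'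
  grind

lemma IsCycle.exists_cons_toSubgraph_eq {u v : V} {c : G.Walk u u} (hc : c.IsCycle)
    (h : c.toSubgraph.Adj u v) :
    ∃ (h : G.Adj u v) (q : G.Walk v u),
      (cons h q).IsCycle ∧ (cons h q).toSubgraph = c.toSubgraph := by
  obtain ⟨c', hc', rfl, hsub⟩ : ∃ c' : G.Walk u u,
      c'.IsCycle ∧ c'.snd = v ∧ c'.toSubgraph = c.toSubgraph := by
    have hv : v ∈ c.toSubgraph.neighborSet u := h
    rw [hc.neighborSet_toSubgraph_endpoint] at hv
    rcases hv with hv | hv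
    · exact ⟨c, hc, hv.symm, rfl⟩
    · exact ⟨c.reverse, hc.reverse, by rw [snd_reverse, hv], c.toSubgraph_reverse⟩
  exact ⟨c'.adj_snd hc'.not_nil, c'.tail, by rwa [cons_tail_eq _ hc'.not_nil],
    by rw [cons_tail_eq _ hc'.not_nil, hsub]⟩

lemma IsPath.start_notMem_support_tail {u v : V} {p : G.Walk u v} (hp : p.IsPath)
    (hn : ¬ p.Nil) : u ∉ p.tail.support := by
  have := hp.support_nodup
  rw [← cons_support_tail hn] at this
  exact (List.nodup_cons.1 this).1

lemma IsCycle.exists_walk_avoiding_of_cons {x y a b : V} {h : G.Adj x y} {q : G.Walk y x}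
    (hc : (cons h q).IsCycle) (ha : (cons h q).toSubgraph.Adj x a)
    (hb : (cons h q).toSubgraph.Adj y b) (hay : a ≠ y) (hbx : b ≠ x) :
    ∃ p : G.Walk a b, p.support ⊆ q.support ∧ x ∉ p.support ∧ y ∉ p.support := by
  obtain ⟨hq, hxy⟩ := (cons_isCycle_iff q h).1 hc
  have hqH : ∀ {s t}, q.toSubgraph.Adj s t → (cons h q).toSubgraph.Adj s t :=
    fun hst => .inr hst
  have hqn : ¬ q.Nil := not_nil_of_ne h.ne.symm
  have hxyH : (cons h q).toSubgraph.Adj x y := by simp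
  have hsnd : q.snd ≠ x := fun e => hxy <| by
    have := q.toSubgraph_adj_snd hqn
    rw [e, adj_toSubgraph_iff_mem_edges] at this
    rwa [Sym2.eq_swap]
  -- The cycle reads `x, y, b, …, a, x`; `r.tail` below is its part from `a` to `b`.
  obtain rfl : b = q.snd := (hc.eq_or_eq_of_toSubgraph_adj hxyH.symm
    (hqH (q.toSubgraph_adj_snd hqn)) hsnd.symm hb).resolve_left hbx
  set r := q.tail.reverse
  have hr : r.IsPath := hq.tail.reverse
  have hrn : ¬ r.Nil := not_nil_of_ne hsnd.symm
  have hyr : y ∉ r.support := by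
    rw [support_reverse, List.mem_reverse]
    exact hq.start_notMem_support_tail hqn
  have hrq : r.support ⊆ q.support := by
    intro w hw
    rw [support_reverse, List.mem_reverse, support_tail_of_not_nil q hqn] at hw
    exact List.mem_of_mem_tail hw
  have hxr : (cons h q).toSubgraph.Adj x r.snd := by
    have := adj_toSubgraph_iff_mem_edges.1 (r.toSubgraph_adj_snd hrn)
    rw [edges_reverse, List.mem_reverse, edges_tail] at this
    exact hqH (adj_toSubgraph_iff_mem_edges.2 (List.mem_of_mem_tail this))
  obtain rfl : a = r.snd := (hc.eq_or_eq_of_toSubgraph_adj hxr hxyH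
    (fun e => hyr (by simpa [e] using r.getVert_mem_support 1)) ha).resolve_right hay
  have hrt : r.tail.support ⊆ r.support := by
    rw [support_tail_of_not_nil r hrn]
    exact List.tail_subset _
  exact ⟨r.tail, fun _ hw => hrq (hrt hw), hr.start_notMem_support_tail hrn,
    fun hy => hyr (hrt hy)⟩

end SimpleGraph.Walk

namespace SimpleGraph

variable {V : Type*} {G : SimpleGraph V}

def closedNeighborSet (G : SimpleGraph V) (v : V) : Set V := insert v (G.neighborSet v)

@[simp]
lemma mem_closedNeighborSet {v w : V} : w ∈ G.closedNeighborSet v ↔ w = v ∨ G.Adj v w :=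
  Iff.rfl

lemma closedNeighborSet_induce {s : Set V} {v : V} (hv : v ∈ s) :
    (G.induce s).closedNeighborSet ⟨v, hv⟩ = Subtype.val ⁻¹' G.closedNeighborSet v := by
  ext ⟨w, _⟩
  simp [Subtype.ext_iff]

namespace Walk

def InternallyAvoids {u v : V} (p : G.Walk u v) (S : Set V) : Prop :=
  ∀ w ∈ p.support, w ≠ u → w ≠ v → w ∉ S

lemma InternallyAvoids.of_support_subset {u v : V} {p q : G.Walk u v} {S : Set V}
    (hp : p.InternallyAvoids S) (hq : q.support ⊆ p.support) : q.InternallyAvoids S :=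
  fun w hw => hp w (hq hw)

end Walk

lemma protectedEdge_iff {x y : V} : ProtectedEdge G x y ↔ ∀ a b : V, G.Adj x a → G.Adj y b →
    ∃ p : G.Walk a b, p.InternallyAvoids (G.closedNeighborSet x ∪ G.closedNeighborSet y) :=
  Iff.rfl

end SimpleGraph

section

open SimpleGraph.Walk

variable {V : Type*} {G : SimpleGraph V}

lemma isInducedCycle_iff {v : V} {c : G.Walk v v} :
    IsInducedCycle G c ↔ c.IsCycle ∧ c.IsChordless := by
  rw [isChordless_iff_forall_mem_edges]
  exact and_congr_right fun _ => ⟨fun h _ _ ha hb => h _ ha _ hb, fun h _ ha _ hb => h ha hb⟩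

lemma isInducedCycle_cons_concat {u w z : V} {p : G.Walk u w} (hp : p.IsPath)
    (hpc : p.IsChordless) (huw : u ≠ w) (hz : z ∉ p.support) (hzu : G.Adj z u)
    (hwz : G.Adj w z) (hN : ∀ t ∈ p.support, G.Adj z t → t = u ∨ t = w) :
    IsInducedCycle G (.cons hzu (p.concat hwz)) := by
  refine isInducedCycle_iff.2 ⟨(cons_isCycle_iff _ hzu).2 ⟨hp.concat hz hwz, ?_⟩, ?_⟩
  · rw [edges_concat, List.concat_eq_append, List.mem_append, List.mem_singleton]
    rintro (he | he)
    · exact hz (p.fst_mem_support_of_mem_edges he)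
    · rcases Sym2.eq_iff.1 he with ⟨rfl, -⟩ | ⟨-, rfl⟩
      · exact hz p.end_mem_support
      · exact huw rfl
  · have hzt : ∀ t ∈ p.support, G.Adj z t → s(z, t) ∈ (cons hzu (p.concat hwz)).edges := by
      intro t ht hzt
      rcases hN t ht hzt with rfl | rfl <;> simp [edges_concat, Sym2.eq_swap]
    rw [isChordless_iff_forall_mem_edges]
    intro a b ha hb hab
    simp only [support_cons, support_concat, List.mem_cons, List.mem_append, List.not_mem_nil,
      or_false] at ha hb
    rcases ha with rfl | ha | rfl <;> rcases hb with rfl | hb | rfl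
    all_goals first
      | exact absurd hab G.irrefl
      | exact hzt _ hb hab
      | exact Sym2.eq_swap ▸ hzt _ ha hab.symm
      | simp [edges_concat, hpc.mem_edges ha hb hab]

lemma IsInducedCycle.exists_internallyAvoids {v x y a b : V} {c : G.Walk v v}
    (hc : IsInducedCycle G c) (hx : x ∈ c.support) (hy : y ∈ c.support) (ha : a ∈ c.support)
    (hb : b ∈ c.support) (hxy : G.Adj x y) (hxa : G.Adj x a) (hyb : G.Adj y b) (hay : a ≠ y)
    (hbx : b ≠ x) :
    ∃ p : G.Walk a b,
      p.InternallyAvoids (G.closedNeighborSet x ∪ G.closedNeighborSet y) := by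
  classical
  obtain ⟨hcyc, hch⟩ := isInducedCycle_iff.1 hc
  obtain ⟨h, q, hcq, hsub⟩ := (hcyc.rotate hx).exists_cons_toSubgraph_eq
    (by rw [toSubgraph_rotate]; exact adj_toSubgraph_iff_mem_edges.2 (hch.mem_edges hx hy hxy))
  rw [toSubgraph_rotate] at hsub
  have hH : ∀ {s t}, s ∈ c.support → t ∈ c.support → G.Adj s t →
      (cons h q).toSubgraph.Adj s t :=
    fun hs ht hst => hsub ▸ adj_toSubgraph_iff_mem_edges.2 (hch.mem_edges hs ht hst)
  obtain ⟨p, hpq, hxp, hyp⟩ :=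
    hcq.exists_walk_avoiding_of_cons (hH hx ha hxa) (hH hy hb hyb) hay hbx
  refine ⟨p, fun w hw hwa hwb => ?_⟩
  have hwc : w ∈ c.support := by
    rw [← mem_verts_toSubgraph, ← hsub, mem_verts_toSubgraph]
    exact List.mem_cons_of_mem _ (hpq hw)
  have hwx : w ≠ x := fun e => hxp (e ▸ hw)
  have hwy : w ≠ y := fun e => hyp (e ▸ hw)
  simp only [Set.mem_union, mem_closedNeighborSet, not_or]
  refine ⟨⟨hwx, fun hxw => ?_⟩, hwy, fun hyw => ?_⟩
  · exact ((hcq.eq_or_eq_of_toSubgraph_adj (hH hx ha hxa) (hH hx hy hxy) hay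
      (hH hx hwc hxw)).elim hwa hwy)
  · exact ((hcq.eq_or_eq_of_toSubgraph_adj (hH hy hx hxy.symm) (hH hy hb hyb) hbx.symm
      (hH hy hwc hyw)).elim hwx hwb)

lemma AvoidableEdge.exists_internallyAvoids {x y a b : V} (hav : AvoidableEdge G x y)
    (hxy : G.Adj x y) (hxa : G.Adj x a) (hyb : G.Adj y b) (hya : ¬ G.Adj y a)
    (hxb : ¬ G.Adj x b) :
    ∃ p : G.Walk a b,
      p.InternallyAvoids (G.closedNeighborSet x ∪ G.closedNeighborSet y) := by
  by_cases hab : a = b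
  · subst hab
    exact ⟨nil, fun w hw hwa => absurd (List.mem_singleton.1 hw) hwa⟩
  by_cases hadj : G.Adj a b
  · refine ⟨hadj.toWalk, fun w hw hwa hwb => ?_⟩
    simp only [Adj.support_toWalk, List.mem_cons, List.not_mem_nil] at hw
    tauto
  have hay : a ≠ y := fun e => hadj (e ▸ hyb)
  have hbx : b ≠ x := fun e => hadj (e ▸ hxa.symm)
  obtain ⟨_, c, hc, ha, hx, hy, hb⟩ :=
    hav a b ⟨hxa.symm, hyb, fun h => hya h.symm, hxb, hadj, hay, hbx, hab⟩
  exact hc.exists_internallyAvoids hx hy ha hb hxy hxa hyb hay hbx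

lemma IsMiddleP4.exists_isInducedCycle {x y a b : V} (h4 : IsMiddleP4 G x y a b)
    (hxy : G.Adj x y) {p : G.Walk a b}
    (hp :
      p.InternallyAvoids (G.closedNeighborSet x ∪ G.closedNeighborSet y)) :
    ∃ (v : V) (c : G.Walk v v), IsInducedCycle G c ∧
      a ∈ c.support ∧ x ∈ c.support ∧ y ∈ c.support ∧ b ∈ c.support := by
  obtain ⟨hax, hyb, hay, hxb, -, hay', hbx', -⟩ := h4
  obtain ⟨q, hq, hqc, hsub⟩ := p.exists_isPath_isChordless_support_subset
  have hq' : ∀ w ∈ q.support,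
      w = a ∨ w = b ∨ (w ≠ x ∧ w ≠ y ∧ ¬ G.Adj x w ∧ ¬ G.Adj y w) := by
    intro w hw
    by_cases hwa : w = a; · exact .inl hwa
    by_cases hwb : w = b; · exact .inr (.inl hwb)
    have := hp.of_support_subset hsub w hw hwa hwb
    simp only [Set.mem_union, mem_closedNeighborSet, not_or] at this
    exact .inr (.inr ⟨this.1.1, this.2.1, this.1.2, this.2.2⟩)
  have hxq : x ∉ q.support := fun hx => by
    rcases hq' x hx with h | h | h
    · exact hax.ne h.symm
    · exact hbx' h.symm
    · exact h.1 rfl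
  have hyq : y ∉ q.support := fun hy => by
    rcases hq' y hy with h | h | h
    · exact hay' h.symm
    · exact hyb.ne h
    · exact h.2.1 rfl
  have hPc : (cons hax.symm q).IsChordless := hqc.cons hax.symm fun z hz hxz => by
    rcases hq' z hz with h | rfl | h
    · exact h
    · exact absurd hxz hxb
    · exact absurd hxz h.2.2.1
  have hN : ∀ t ∈ (cons hax.symm q).support, G.Adj y t → t = x ∨ t = b := by
    intro t ht hyt
    rw [support_cons, List.mem_cons] at ht
    rcases ht with rfl | ht
    · exact .inl rfl
    rcases hq' t ht with rfl | rfl | h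
    · exact absurd hyt.symm hay
    · exact .inr rfl
    · exact absurd hyt h.2.2.2
  refine ⟨y, cons hxy.symm ((cons hax.symm q).concat hyb.symm),
    isInducedCycle_cons_concat (hq.cons hxq) hPc (fun e => hbx' e.symm) ?_ hxy.symm hyb.symm hN,
    ?_, ?_, ?_, ?_⟩
  · rw [support_cons, List.mem_cons, not_or]
    exact ⟨hxy.ne.symm, hyq⟩
  all_goals simp

lemma exists_induce_walk_internallyAvoids_iff {s T : Set V} (hsT : sᶜ ⊆ T) {a b : V}
    (ha : a ∈ s) (hb : b ∈ s) :
    (∃ p : (G.induce s).Walk ⟨a, ha⟩ ⟨b, hb⟩,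
      p.InternallyAvoids (Subtype.val ⁻¹' T)) ↔
      ∃ p : G.Walk a b, p.InternallyAvoids T := by
  constructor
  · rintro ⟨p, hp⟩
    refine ⟨p.map (Embedding.induce s).toHom, fun w hw hwa hwb => ?_⟩
    obtain ⟨w, hwp, rfl⟩ := List.mem_map.1 (p.support_map _ ▸ hw)
    exact hp w hwp (fun e => hwa (e ▸ rfl)) (fun e => hwb (e ▸ rfl))
  · rintro ⟨p, hp⟩
    have hps : ∀ w ∈ p.support, w ∈ s := fun w hw => by
      by_cases hwa : w = a; · exact hwa ▸ ha
      by_cases hwb : w = b; · exact hwb ▸ hb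
      exact not_not.1 fun hws => hp w hw hwa hwb (hsT hws)
    refine ⟨p.induce s hps, fun w hw hwa hwb => hp w ?_ ?_ ?_⟩
    · rwa [support_induce, List.mem_attachWith] at hw
    · exact fun e => hwa (Subtype.ext e)
    · exact fun e => hwb (Subtype.ext e)

end

theorem avoidableEdge_iff_protected_in_delete_common_general {V : Type*}
    (G : SimpleGraph V) (x y : V) (hxy : G.Adj x y) :
    AvoidableEdge G x y ↔
      ProtectedEdge (G.induce (G.neighborSet x ∩ G.neighborSet y)ᶜ)
        ⟨x, fun h => (G.irrefl h.1)⟩ ⟨y, fun h => (G.irrefl h.2)⟩ := by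
  set s := (G.neighborSet x ∩ G.neighborSet y)ᶜ
  have hsN : sᶜ ⊆ G.closedNeighborSet x ∪ G.closedNeighborSet y := fun w hw =>
    .inl (.inr (compl_compl (G.neighborSet x ∩ G.neighborSet y) ▸ hw).1)
  rw [protectedEdge_iff]
  simp only [closedNeighborSet_induce, ← Set.preimage_union]
  constructor
  · rintro hav ⟨a, ha⟩ ⟨b, hb⟩ hxa hyb
    exact (exists_induce_walk_internallyAvoids_iff hsN ha hb).2
      (hav.exists_internallyAvoids hxy hxa hyb (fun h => ha ⟨hxa, h⟩)
        (fun h => hb ⟨h, hyb⟩))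
  · intro hpr a b h4
    have ha : a ∈ s := fun h => h4.2.2.1 h.2.symm
    have hb : b ∈ s := fun h => h4.2.2.2.1 h.1
    obtain ⟨p, hp⟩ := (exists_induce_walk_internallyAvoids_iff hsN ha hb).1
      (hpr ⟨a, ha⟩ ⟨b, hb⟩ h4.1.symm h4.2.1)
    exact h4.exists_isInducedCycle hxy hp

theorem avoidableEdge_iff_protected_in_delete_common {V : Type*} [Fintype V]
    (G : SimpleGraph V) (x y : V) (hxy : G.Adj x y) :
    AvoidableEdge G x y ↔
      ProtectedEdge (G.induce (G.neighborSet x ∩ G.neighborSet y)ᶜ)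
        ⟨x, fun h => (G.irrefl h.1)⟩ ⟨y, fun h => (G.irrefl h.2)⟩ :=
  avoidableEdge_iff_protected_in_delete_common_general G x y hxy
end

section
/- Let P be an induced path on k ≥ 3 vertices in a finite simple graph G with endpoints x and y, and let I[P] = N[in(P)] \ {x,y} where in(P) is the set of internal vertices of P. Then P is an avoidable path in G if and only if xy is an avoidable edge in the graph G + xy − I[P]. -/
open SimpleGraph

/-- A walk is an induced path if it is a path and every adjacency between its
vertices is an edge of the path. -/
def IsInducedPath {V : Type*} (G : SimpleGraph V) {x y : V} (p : G.Walk x y) : Prop :=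
  p.IsPath ∧ ∀ a ∈ p.support, ∀ b ∈ p.support, G.Adj a b → s(a, b) ∈ p.edges

/-- An induced path `P` (with endpoints `x, y`) is avoidable if every induced
path on two more vertices containing `P` as an internal path is contained in
an induced cycle. -/
def AvoidablePath {V : Type*} (G : SimpleGraph V) {x y : V} (p : G.Walk x y) : Prop :=
  ∀ (a b : V) (hax : G.Adj a x) (hyb : G.Adj y b),
    IsInducedPath G ((SimpleGraph.Walk.cons hax p).concat hyb) →
    ∃ (v : V) (c : G.Walk v v), IsInducedCycle G c ∧
      ∀ w ∈ ((SimpleGraph.Walk.cons hax p).concat hyb).support, w ∈ c.support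

/-- `I[P] = N[in(P)] \ {x, y}`: the internal vertices of `P` together with all
their neighbors other than the endpoints `x, y`. -/
def pathClosure {V : Type*} (G : SimpleGraph V) {x y : V} (p : G.Walk x y) : Set V :=
  {v | v ≠ x ∧ v ≠ y ∧ ∃ w ∈ p.support, w ≠ x ∧ w ≠ y ∧ (v = w ∨ G.Adj w v)}

/-!
Write `S` for the complement of `I[P]`. The only vertices of `P` in `S` are `x` and `y`, and a
vertex of `S` other than `x, y` has no neighbour among the internal vertices of `P`. Hence the
extensions `a P b` of `P` that are induced paths of `G` are exactly the induced `P₄`s `a x y b`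
of `G + xy − I[P]` (in particular `a, b ∈ S`).

An induced cycle of `G` through `a P b` contains the edges of `P`, so it consists of `P` followed
by a path `R` from `y` back to `x`; inducedness keeps `R` inside `S`, and `R` closed up by the new
edge `xy` is an induced cycle of `G + xy − I[P]`. Conversely, an induced cycle there through `xy`
is `xy` followed by a path `Q` in `S` not using `xy`, and replacing `xy` by `P` turns it into an
induced cycle of `G`: chords between `P` and `Q` could only end at internal vertices of `P`, and
`Q` avoids their neighbourhoods.
-/

namespace SimpleGraph

variable {V : Type*} {G : SimpleGraph V}

theorem not_adj_of_eq_or_eq {x y u v : V} (h : ¬ G.Adj x y) (hu : u = x ∨ u = y)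
    (hv : v = x ∨ v = y) : ¬ G.Adj u v := by
  rcases hu with rfl | rfl <;> rcases hv with rfl | rfl
  exacts [G.irrefl, h, fun h' => h h'.symm, G.irrefl]

namespace Walk

theorem IsPath.ne_of_length_pos {u v : V} {p : G.Walk u v} (hp : p.IsPath) (h : 0 < p.length) :
    u ≠ v := by
  rintro rfl
  simp [(isPath_iff_nil.1 hp).length_eq_zero] at h

theorem IsPath.exists_eq_append_of_edges_subset {u v w : V} {p : G.Walk u w} {d : G.Walk u v}
    (hp : p.IsTrail) (hd : d.IsPath) (h : p.edges ⊆ d.edges) :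
    ∃ r : G.Walk w v, d = p.append r := by
  induction p with
  | nil => exact ⟨d, rfl⟩
  | @cons u b w hub q ih =>
    cases d with
    | nil => simp at h
    | cons hud d =>
      obtain rfl : b = _ := by simpa using hd.eq_snd_of_mem_edges (h (by simp))
      rw [isTrail_cons] at hp
      have hsub : q.edges ⊆ d.edges := fun e he =>
        (List.mem_cons.1 (h (List.mem_cons_of_mem _ he))).resolve_left
          (ne_of_mem_of_not_mem he hp.2)
      obtain ⟨r, rfl⟩ := ih hp.1 hd.of_cons hsub
      exact ⟨r, rfl⟩

theorem IsCycle.eq_snd_or_eq_penultimate {u w : V} {c : G.Walk u u} (hc : c.IsCycle)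
    (h : s(u, w) ∈ c.edges) : w = c.snd ∨ w = c.penultimate := by
  cases c with
  | nil => simp at h
  | cons hud d =>
    rw [edges_cons, List.mem_cons, Sym2.eq_iff] at h
    rcases h with (⟨-, rfl⟩ | ⟨rfl, -⟩) | h
    · simp
    · exact (hud.ne rfl).elim
    · right
      rw [penultimate_cons_of_not_nil _ _ (not_nil_of_isCycle_cons hc)]
      exact ((cons_isCycle_iff d hud).1 hc).1.eq_penultimate_of_mem_edges h

theorem IsCycle.eq_or_eq_of_mem_support_append {u v w : V} {p : G.Walk u v} {q : G.Walk v u}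
    (hc : (p.append q).IsCycle) (hp : w ∈ p.support) (hq : w ∈ q.support) : w = u ∨ w = v := by
  by_contra! h
  have hnd := hc.support_nodup
  rw [tail_support_append, List.nodup_append'] at hnd
  rw [← cons_tail_support] at hp hq
  exact hnd.2.2 ((List.mem_cons.1 hp).resolve_left h.1) ((List.mem_cons.1 hq).resolve_left h.2)

end Walk

end SimpleGraph

section InducedWalks

variable {V : Type*} {G : SimpleGraph V}

theorem isInducedPath_reverse_iff {x y : V} {p : G.Walk x y} :
    IsInducedPath G p.reverse ↔ IsInducedPath G p := by
  simp only [IsInducedPath, Walk.isPath_reverse_iff, Walk.support_reverse, Walk.edges_reverse,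
    List.mem_reverse]

theorem isInducedPath_cons_iff {a x y : V} (h : G.Adj a x) (p : G.Walk x y) :
    IsInducedPath G (.cons h p) ↔
      IsInducedPath G p ∧ a ∉ p.support ∧ ∀ w ∈ p.support, G.Adj a w → w = x := by
  simp only [IsInducedPath, Walk.cons_isPath_iff, Walk.support_cons, Walk.edges_cons,
    List.mem_cons]
  constructor
  · rintro ⟨⟨hp, ha⟩, hind⟩
    refine ⟨⟨hp, fun u hu v hv huv => ?_⟩, ha, fun w hw haw => ?_⟩
    · refine (hind u (.inr hu) v (.inr hv) huv).resolve_left fun he => ha ?_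
      rcases Sym2.eq_iff.1 he with ⟨rfl, -⟩ | ⟨-, rfl⟩ <;> assumption
    · rcases hind a (.inl rfl) w (.inr hw) haw with he | he
      · exact Sym2.congr_right.1 he
      · exact absurd (p.fst_mem_support_of_mem_edges he) ha
  · rintro ⟨⟨hp, hind⟩, ha, hnbr⟩
    refine ⟨⟨hp, ha⟩, ?_⟩
    rintro u (rfl | hu) v (rfl | hv) huv
    · exact (huv.ne rfl).elim
    · exact .inl (by rw [hnbr v hv huv])
    · exact .inl (by rw [hnbr u hu huv.symm, Sym2.eq_swap])
    · exact .inr (hind u hu v hv huv)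

theorem IsInducedPath.not_adj_of_two_le_length {x y : V} {p : G.Walk x y}
    (hp : IsInducedPath G p) (hk : 2 ≤ p.length) : ¬ G.Adj x y := fun h => by
  have hsnd := hp.1.eq_snd_of_mem_edges (hp.2 x p.start_mem_support y p.end_mem_support h)
  have := hp.1.getVert_injOn (show 1 ∈ {i | i ≤ p.length} by simp; omega)
    (show p.length ∈ {i | i ≤ p.length} by simp) (by simp [← hsnd])
  omega

theorem IsInducedCycle.edges_subset_of_support_subset {u v w : V} {c : G.Walk v v}
    (hc : IsInducedCycle G c) {q : G.Walk u w} (hq : ∀ t ∈ q.support, t ∈ c.support) :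
    q.edges ⊆ c.edges := by
  intro e he
  induction e using Sym2.ind with
  | h a b =>
    exact hc.2 a (hq a (q.fst_mem_support_of_mem_edges he)) b
      (hq b (q.snd_mem_support_of_mem_edges he)) (q.adj_of_mem_edges he)

theorem IsInducedCycle.rotate [DecidableEq V] {u v : V} {c : G.Walk v v}
    (hc : IsInducedCycle G c) (hu : u ∈ c.support) : IsInducedCycle G (c.rotate u hu) := by
  refine ⟨hc.1.rotate hu, fun a ha b hb hab => ?_⟩
  rw [Walk.mem_support_rotate_iff] at ha hb
  exact (c.rotate_edges u hu).perm.mem_iff.2 (hc.2 a ha b hb hab)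

theorem IsInducedCycle.reverse {v : V} {c : G.Walk v v} (hc : IsInducedCycle G c) :
    IsInducedCycle G c.reverse := by
  refine ⟨hc.1.reverse, fun a ha b hb hab => ?_⟩
  simp only [Walk.support_reverse, Walk.edges_reverse, List.mem_reverse] at ha hb ⊢
  exact hc.2 a ha b hb hab

theorem IsInducedCycle.exists_snd_eq {v x w : V} {c : G.Walk v v} (hc : IsInducedCycle G c)
    (hx : x ∈ c.support) (hw : w ∈ c.support) (hxw : G.Adj x w) :
    ∃ c' : G.Walk x x, IsInducedCycle G c' ∧ c'.snd = w ∧ ∀ u, u ∈ c'.support ↔ u ∈ c.support := by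
  classical
  have hrot := hc.rotate hx
  have hsupp (u : V) : u ∈ (c.rotate x hx).support ↔ u ∈ c.support := c.mem_support_rotate_iff ..
  have hxw' := hrot.2 x (Walk.start_mem_support _) w ((hsupp w).2 hw) hxw
  rcases hrot.1.eq_snd_or_eq_penultimate hxw' with h | h
  · exact ⟨_, hrot, h.symm, hsupp⟩
  · refine ⟨_, hrot.reverse, by rw [Walk.snd_reverse, h], fun u => ?_⟩
    rw [Walk.support_reverse, List.mem_reverse, hsupp]

theorem IsInducedCycle.exists_append {v x y : V} {c : G.Walk v v} (hc : IsInducedCycle G c)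
    {p : G.Walk x y} (hp : p.IsPath) (hxy : x ≠ y) (hpc : ∀ w ∈ p.support, w ∈ c.support) :
    ∃ r : G.Walk y x, IsInducedCycle G (p.append r) ∧
      ∀ u, u ∈ (p.append r).support ↔ u ∈ c.support := by
  cases p with
  | nil => exact absurd rfl hxy
  | @cons _ b _ hxb q =>
    obtain ⟨c', hc', hsnd, hsupp⟩ := hc.exists_snd_eq (hpc x (by simp)) (hpc b (by simp)) hxb
    cases c' with
    | nil => exact absurd hc'.1 Walk.not_isCycle_nil
    | @cons _ b' _ hxb' d =>
      obtain rfl : b' = b := by simpa using hsnd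
      rw [Walk.cons_isPath_iff] at hp
      have hxq : s(x, b') ∉ q.edges := fun h => hp.2 (q.fst_mem_support_of_mem_edges h)
      have hqc' := hc'.edges_subset_of_support_subset (q := q) fun t ht =>
        (hsupp t).2 (hpc t (List.mem_cons_of_mem _ ht))
      have hsub : q.edges ⊆ d.edges := fun e he =>
        (List.mem_cons.1 (hqc' he)).resolve_left (ne_of_mem_of_not_mem he hxq)
      obtain ⟨r, rfl⟩ := ((Walk.cons_isCycle_iff d hxb').1 hc'.1).1
        |>.exists_eq_append_of_edges_subset hp.1.isTrail hsub
      exact ⟨r, hc', hsupp⟩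

end InducedWalks

section pathClosure

variable {V : Type*} {G : SimpleGraph V} {x y : V} {p : G.Walk x y}

theorem start_notMem_pathClosure : x ∉ pathClosure G p := fun h => h.1 rfl

theorem end_notMem_pathClosure : y ∉ pathClosure G p := fun h => h.2.1 rfl

theorem notMem_pathClosure_iff {v : V} :
    v ∉ pathClosure G p ↔
      v = x ∨ v = y ∨ v ∉ p.support ∧ ∀ w ∈ p.support, G.Adj w v → w = x ∨ w = y := by
  simp only [pathClosure, Set.mem_ofPred_eq, not_and, not_exists, not_or]
  constructor
  · intro h
    by_cases hvx : v = x
    · exact .inl hvx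
    by_cases hvy : v = y
    · exact .inr (.inl hvy)
    refine .inr (.inr ⟨fun hv => (h hvx hvy v hv hvx hvy).1 rfl, fun w hw hwv => ?_⟩)
    by_contra! hw'
    exact (h hvx hvy w hw hw'.1 hw'.2).2 hwv
  · rintro (rfl | rfl | ⟨hv, hnbr⟩) hvx hvy w hw hwx hwy
    · exact absurd rfl hvx
    · exact absurd rfl hvy
    · exact ⟨fun h => hv (h ▸ hw), fun hwv => (hnbr w hw hwv).elim hwx hwy⟩

theorem eq_or_eq_of_mem_support_of_notMem_pathClosure {v : V} (hv : v ∈ p.support)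
    (hvS : v ∉ pathClosure G p) : v = x ∨ v = y := by
  rcases notMem_pathClosure_iff.1 hvS with h | h | h
  · exact .inl h
  · exact .inr h
  · exact absurd hv h.1

theorem isInducedPath_cons_concat_iff (hp : IsInducedPath G p) (hxy : x ≠ y) {a b : V}
    (hax : G.Adj a x) (hyb : G.Adj y b) :
    IsInducedPath G ((Walk.cons hax p).concat hyb) ↔
      a ∉ pathClosure G p ∧ b ∉ pathClosure G p ∧ IsMiddleP4 G x y a b := by
  rw [← isInducedPath_reverse_iff, Walk.reverse_concat, isInducedPath_cons_iff,
    isInducedPath_reverse_iff, isInducedPath_cons_iff]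
  simp only [Walk.support_reverse, List.mem_reverse, Walk.support_cons, List.mem_cons,
    forall_eq_or_imp, not_or, notMem_pathClosure_iff, IsMiddleP4, iff_true_intro hp, true_and]
  have hx := p.start_mem_support
  have hy := p.end_mem_support
  constructor
  · rintro ⟨⟨ha, hna⟩, ⟨hba, hb⟩, hnba, hnb⟩
    refine ⟨.inr (.inr ⟨ha, fun w hw hwa => .inl (hna w hw hwa.symm)⟩),
      .inr (.inr ⟨hb, fun w hw hwb => .inr (hnb w hw hwb.symm)⟩), hax, hyb,
      fun h => hxy (hna y hy h).symm, fun h => hxy (hnb x hx h.symm),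
      fun h => ha (hnba h.symm ▸ hy), fun h => ha (h ▸ hy), fun h => hb (h ▸ hx),
      fun h => hba h.symm⟩
  · rintro ⟨hA, hB, -, -, hnay, hnxb, hnab, hay, hbx, hab⟩
    obtain ⟨ha, hna⟩ := (hA.resolve_left hax.ne).resolve_left hay
    obtain ⟨hb, hnb⟩ := (hB.resolve_left hbx).resolve_left hyb.ne.symm
    exact ⟨⟨ha, fun w hw haw => (hna w hw haw.symm).resolve_right fun h => hnay (h ▸ haw)⟩,
      ⟨Ne.symm hab, hb⟩, fun h => absurd h.symm hnab,
      fun w hw hbw => (hnb w hw hbw.symm).resolve_left fun h => hnxb (h ▸ hbw.symm)⟩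

theorem notMem_pathClosure_of_isInducedCycle_append {r : G.Walk y x}
    (hc : IsInducedCycle G (p.append r)) : ∀ w ∈ r.support, w ∉ pathClosure G p := by
  intro w hw
  have hpr {u : V} (hu : u ∈ p.support) (hu' : u ∈ r.support) : u = x ∨ u = y :=
    hc.1.eq_or_eq_of_mem_support_append hu hu'
  rw [notMem_pathClosure_iff]
  by_cases hwxy : w = x ∨ w = y
  · exact hwxy.elim .inl (.inr ∘ .inl)
  refine .inr (.inr ⟨fun hwp => hwxy (hpr hwp hw), fun u hu huw => ?_⟩)
  have he := hc.2 u ((Walk.mem_support_append_iff _ _).2 (.inl hu)) w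
    ((Walk.mem_support_append_iff _ _).2 (.inr hw)) huw
  rw [Walk.edges_append, List.mem_append] at he
  rcases he with he | he
  · exact absurd (hpr (p.snd_mem_support_of_mem_edges he) hw) hwxy
  · exact hpr hu (r.fst_mem_support_of_mem_edges he)

end pathClosure

/-- The graph `G + xy − I[P]`. -/
abbrev reducedGraph {V : Type*} (G : SimpleGraph V) {x y : V} (p : G.Walk x y) :
    SimpleGraph ↥(pathClosure G p)ᶜ :=
  (G ⊔ fromEdgeSet {s(x, y)}).induce (pathClosure G p)ᶜ

section reducedGraph

variable {V : Type*} {G : SimpleGraph V} {x y : V} {p : G.Walk x y}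

theorem reducedGraph_adj {u v : ↥(pathClosure G p)ᶜ} :
    (reducedGraph G p).Adj u v ↔ G.Adj u v ∨
      s(u, v) = s(⟨x, start_notMem_pathClosure⟩, ⟨y, end_notMem_pathClosure⟩) ∧ u ≠ v := by
  simp only [comap_adj, Function.Embedding.coe_subtype, sup_adj, fromEdgeSet_adj,
    Set.mem_singleton_iff, Sym2.eq_iff, Subtype.ext_iff, ne_eq]

theorem reducedGraph_adj_endpoints (hxy : x ≠ y) :
    (reducedGraph G p).Adj ⟨x, start_notMem_pathClosure⟩ ⟨y, end_notMem_pathClosure⟩ :=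
  reducedGraph_adj.2 (.inr ⟨rfl, fun h => hxy (congrArg Subtype.val h)⟩)

theorem isMiddleP4_reducedGraph_iff (hxy : x ≠ y) {a b : ↥(pathClosure G p)ᶜ} :
    IsMiddleP4 (reducedGraph G p) ⟨x, start_notMem_pathClosure⟩ ⟨y, end_notMem_pathClosure⟩ a b ↔
      IsMiddleP4 G x y a b := by
  simp only [IsMiddleP4, reducedGraph_adj, Sym2.eq_iff, Subtype.ext_iff, ne_eq]
  have hirr (u : V) : ¬ G.Adj u u := G.irrefl
  grind

theorem exists_reducedGraph_walk {u v : V} (r : G.Walk u v)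
    (hr : ∀ w ∈ r.support, w ∉ pathClosure G p) :
    ∃ q : (reducedGraph G p).Walk ⟨u, hr u r.start_mem_support⟩ ⟨v, hr v r.end_mem_support⟩,
      q.support.map Subtype.val = r.support ∧ q.edges.map (Sym2.map Subtype.val) = r.edges := by
  set r' := r.mapLe (le_sup_left : G ≤ G ⊔ fromEdgeSet {s(x, y)})
  have hr' : ∀ w ∈ r'.support, w ∈ (pathClosure G p)ᶜ := fun w hw => hr w (by simpa [r'] using hw)
  refine ⟨r'.induce _ hr', by simp [r'], ?_⟩
  have h := congrArg Walk.edges (Walk.map_induce r' hr')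
  rw [Walk.edges_map] at h
  exact h.trans (Walk.edges_mapLe_eq_edges _ _)

theorem exists_walk_of_reducedGraph_walk {u v : ↥(pathClosure G p)ᶜ}
    (q : (reducedGraph G p).Walk u v)
    (hq : s(⟨x, start_notMem_pathClosure⟩, ⟨y, end_notMem_pathClosure⟩) ∉ q.edges) :
    ∃ r : G.Walk u v,
      q.support.map Subtype.val = r.support ∧ q.edges.map (Sym2.map Subtype.val) = r.edges := by
  have hG : ∀ e ∈ (q.map (Embedding.induce _).toHom).edges, e ∈ G.edgeSet := by
    simp only [Walk.edges_map, List.mem_map]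
    rintro _ ⟨⟨a, b⟩, he, rfl⟩
    rcases reducedGraph_adj.1 (q.adj_of_mem_edges he) with hab | ⟨hab, -⟩
    · exact hab
    · exact absurd (hab ▸ he) hq
  exact ⟨(q.map (Embedding.induce _).toHom).transfer G hG,
    ((Walk.support_transfer _ hG).trans (Walk.support_map _ _)).symm,
    ((Walk.edges_transfer _ hG).trans (Walk.edges_map _ _)).symm⟩

/- `q` and `r` are one walk from `y` to `x`, read in `G + xy − I[P]` and in `G` respectively (that
is what `hsupp` and `hedges` say); `h` is the new edge `xy`. -/
variable {r : G.Walk y x}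
  {q : (reducedGraph G p).Walk ⟨y, end_notMem_pathClosure⟩ ⟨x, start_notMem_pathClosure⟩}
  (h : (reducedGraph G p).Adj ⟨x, start_notMem_pathClosure⟩ ⟨y, end_notMem_pathClosure⟩)

theorem notMem_pathClosure_of_map_support_eq (hsupp : q.support.map Subtype.val = r.support) :
    ∀ w ∈ r.support, w ∉ pathClosure G p := by
  intro w hw
  rw [← hsupp] at hw
  obtain ⟨w', -, rfl⟩ := List.mem_map.1 hw
  exact w'.2

theorem mem_support_cons_iff_mem_support_append (hsupp : q.support.map Subtype.val = r.support) {w : V}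
    (hw : w ∉ pathClosure G p) :
    ⟨w, hw⟩ ∈ (Walk.cons h q).support ↔ w ∈ (p.append r).support := by
  have hq (w' : ↥(pathClosure G p)ᶜ) : w' ∈ q.support ↔ ↑w' ∈ r.support := by
    rw [← hsupp, List.mem_map_of_injective Subtype.val_injective]
  simp only [Walk.support_cons, List.mem_cons, hq, Walk.mem_support_append_iff, Subtype.ext_iff]
  constructor
  · rintro (rfl | hwr)
    exacts [.inl p.start_mem_support, .inr hwr]
  · rintro (hwp | hwr)
    · rcases eq_or_eq_of_mem_support_of_notMem_pathClosure hwp hw with rfl | rfl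
      exacts [.inl rfl, .inr r.start_mem_support]
    · exact .inr hwr

theorem isCycle_append_iff_isCycle_cons (hp : IsInducedPath G p) (hk : 2 ≤ p.length)
    (hsupp : q.support.map Subtype.val = r.support)
    (hedges : q.edges.map (Sym2.map Subtype.val) = r.edges) :
    (p.append r).IsCycle ↔ (Walk.cons h q).IsCycle := by
  have hrS := notMem_pathClosure_of_map_support_eq hsupp
  have hxy : s(⟨x, start_notMem_pathClosure⟩, ⟨y, end_notMem_pathClosure⟩) ∉ q.edges :=
    fun he => hp.not_adj_of_two_le_length hk (r.adj_of_mem_edges (hedges ▸ List.mem_map_of_mem he))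
  rw [Walk.cons_isCycle_iff, and_iff_left hxy, Walk.isPath_def,
    ← List.nodup_map_iff Subtype.val_injective, hsupp, ← Walk.isPath_def]
  constructor
  · exact fun hc => hc.isPath_of_append_right (Walk.not_nil_iff_lt_length.2 (by omega))
  · intro hr
    refine hp.1.isCycle_append hr (fun w hwp hwr => ?_) (.inl hk)
    have hpn := hp.1.support_nodup
    have hrn := hr.support_nodup
    rw [← Walk.cons_tail_support, List.nodup_cons] at hpn hrn
    rcases eq_or_eq_of_mem_support_of_notMem_pathClosure (List.mem_of_mem_tail hwp)
      (hrS w (List.mem_of_mem_tail hwr)) with rfl | rfl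
    exacts [hpn.1 hwp, hrn.1 hwr]

theorem IsInducedCycle.cons_of_append (hp : IsInducedPath G p) (hk : 2 ≤ p.length)
    (hsupp : q.support.map Subtype.val = r.support)
    (hedges : q.edges.map (Sym2.map Subtype.val) = r.edges) (hc : IsInducedCycle G (p.append r)) :
    IsInducedCycle (reducedGraph G p) (.cons h q) := by
  refine ⟨(isCycle_append_iff_isCycle_cons h hp hk hsupp hedges).1 hc.1, ?_⟩
  have hr (w) (hw : w ∈ (Walk.cons h q).support) : (w : V) ∈ (p.append r).support := by
    rw [Walk.mem_support_append_iff, ← hsupp]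
    rcases List.mem_cons.1 hw with rfl | hw
    exacts [.inr (List.mem_map_of_mem q.end_mem_support), .inr (List.mem_map_of_mem hw)]
  intro u hu v hv huv
  rw [Walk.edges_cons, List.mem_cons]
  rcases reducedGraph_adj.1 huv with hG | ⟨he, -⟩
  · have he := hc.2 u (hr u hu) v (hr v hv) hG
    rw [Walk.edges_append, List.mem_append] at he
    rcases he with he | he
    · refine absurd hG (not_adj_of_eq_or_eq (hp.not_adj_of_two_le_length hk) ?_ ?_)
      exacts [eq_or_eq_of_mem_support_of_notMem_pathClosure (p.fst_mem_support_of_mem_edges he) u.2,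
        eq_or_eq_of_mem_support_of_notMem_pathClosure (p.snd_mem_support_of_mem_edges he) v.2]
    · rw [← hedges, ← Sym2.map_mk,
        List.mem_map_of_injective (Sym2.map.injective Subtype.val_injective)] at he
      exact .inr he
  · exact .inl he

theorem IsInducedCycle.append_of_cons (hp : IsInducedPath G p) (hk : 2 ≤ p.length)
    (hsupp : q.support.map Subtype.val = r.support)
    (hedges : q.edges.map (Sym2.map Subtype.val) = r.edges)
    (hc : IsInducedCycle (reducedGraph G p) (.cons h q)) : IsInducedCycle G (p.append r) := by
  refine ⟨(isCycle_append_iff_isCycle_cons h hp hk hsupp hedges).2 hc.1, ?_⟩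
  have hrS := notMem_pathClosure_of_map_support_eq hsupp
  have hrr : ∀ u ∈ r.support, ∀ v ∈ r.support, G.Adj u v → s(u, v) ∈ r.edges := by
    intro u hu v hv huv
    have hq (w) (hw : w ∈ r.support) : ⟨w, hrS w hw⟩ ∈ (Walk.cons h q).support :=
      List.mem_cons_of_mem _ ((List.mem_map_of_injective Subtype.val_injective).1 (hsupp ▸ hw))
    have he := hc.2 _ (hq u hu) _ (hq v hv) (reducedGraph_adj.2 (.inl huv))
    rw [Walk.edges_cons, List.mem_cons] at he
    rcases he with he | he
    · have he' := congrArg (Sym2.map Subtype.val) he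
      simp only [Sym2.map_mk, Sym2.eq_iff] at he'
      rcases he' with ⟨rfl, rfl⟩ | ⟨rfl, rfl⟩
      exacts [absurd huv (hp.not_adj_of_two_le_length hk),
        absurd huv.symm (hp.not_adj_of_two_le_length hk)]
    · exact hedges ▸ List.mem_map_of_mem he
  have hpr : ∀ u ∈ p.support, ∀ v ∈ r.support, G.Adj u v → s(u, v) ∈ (p.append r).edges := by
    intro u hu v hv huv
    rw [Walk.edges_append, List.mem_append]
    rcases notMem_pathClosure_iff.1 (hrS v hv) with rfl | rfl | ⟨-, hnbr⟩
    · exact .inl (hp.2 u hu _ p.start_mem_support huv)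
    · exact .inl (hp.2 u hu _ p.end_mem_support huv)
    · refine .inr (hrr u ?_ v hv huv)
      rcases hnbr u hu huv with rfl | rfl
      exacts [r.end_mem_support, r.start_mem_support]
  intro u hu v hv huv
  rw [Walk.mem_support_append_iff] at hu hv
  rcases hu with hu | hu <;> rcases hv with hv | hv
  · rw [Walk.edges_append]
    exact List.mem_append_left _ (hp.2 u hu v hv huv)
  · exact hpr u hu v hv huv
  · rw [Sym2.eq_swap]
    exact hpr v hv u hu huv.symm
  · rw [Walk.edges_append]
    exact List.mem_append_right _ (hrr u hu v hv huv)

theorem avoidableEdge_of_avoidablePath (hp : IsInducedPath G p) (hk : 2 ≤ p.length)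
    (hP : AvoidablePath G p) :
    AvoidableEdge (reducedGraph G p) ⟨x, start_notMem_pathClosure⟩ ⟨y, end_notMem_pathClosure⟩ := by
  have hxy := hp.1.ne_of_length_pos (by omega)
  have hxy' := reducedGraph_adj_endpoints (p := p) hxy
  rintro ⟨a, ha⟩ ⟨b, hb⟩ hM
  rw [isMiddleP4_reducedGraph_iff hxy] at hM
  obtain ⟨_, c, hc, hWc⟩ :=
    hP a b hM.1 hM.2.1 ((isInducedPath_cons_concat_iff hp hxy _ _).2 ⟨ha, hb, hM⟩)
  obtain ⟨r, hr, hrc⟩ := hc.exists_append hp.1 hxy fun w hw => hWc w (by simp [hw])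
  obtain ⟨q, hsupp, hedges⟩ :=
    exists_reducedGraph_walk r (notMem_pathClosure_of_isInducedCycle_append hr)
  have hmem (w : V) (hw : w ∉ pathClosure G p) (hwW : w ∈ _) :=
    (mem_support_cons_iff_mem_support_append hxy' hsupp hw).2 ((hrc w).2 (hWc w hwW))
  exact ⟨_, _, hr.cons_of_append hxy' hp hk hsupp hedges, hmem a ha (by simp),
    hmem x start_notMem_pathClosure (by simp), hmem y end_notMem_pathClosure (by simp),
    hmem b hb (by simp)⟩

theorem avoidablePath_of_avoidableEdge (hp : IsInducedPath G p) (hk : 2 ≤ p.length)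
    (hE : AvoidableEdge (reducedGraph G p) ⟨x, start_notMem_pathClosure⟩
      ⟨y, end_notMem_pathClosure⟩) :
    AvoidablePath G p := by
  have hxy := hp.1.ne_of_length_pos (by omega)
  have hxy' := reducedGraph_adj_endpoints (p := p) hxy
  intro a b hax hyb hW
  obtain ⟨ha, hb, hM⟩ := (isInducedPath_cons_concat_iff hp hxy hax hyb).1 hW
  obtain ⟨_, c, hc, hac, hxc, hyc, hbc⟩ :=
    hE ⟨a, ha⟩ ⟨b, hb⟩ ((isMiddleP4_reducedGraph_iff hxy).2 hM)
  obtain ⟨q, hq, hqc⟩ := hc.exists_append (p := .cons hxy' .nil) (by simpa using hxy'.ne) hxy'.ne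
    (by simp [hxc, hyc])
  obtain ⟨r, hsupp, hedges⟩ :=
    exists_walk_of_reducedGraph_walk q ((Walk.cons_isCycle_iff q hxy').1 hq.1).2
  have hmem (w : V) (hw : w ∉ pathClosure G p) (hwc : ⟨w, hw⟩ ∈ c.support) :=
    (mem_support_cons_iff_mem_support_append hxy' hsupp hw).1 ((hqc _).2 hwc)
  refine ⟨_, _, hq.append_of_cons hxy' hp hk hsupp hedges, fun w hw => ?_⟩
  simp only [Walk.concat_cons, Walk.support_cons, Walk.support_concat, List.mem_cons,
    List.mem_append, List.not_mem_nil, or_false] at hw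
  rcases hw with rfl | hw | rfl
  exacts [hmem w ha hac, (Walk.mem_support_append_iff _ _).2 (.inl hw), hmem w hb hbc]

end reducedGraph

theorem avoidablePath_iff_avoidableEdge_general {V : Type*}
    (G : SimpleGraph V) (x y : V) (p : G.Walk x y)
    (hp : IsInducedPath G p) (hk : 2 ≤ p.length) :
    AvoidablePath G p ↔
      AvoidableEdge
        ((G ⊔ fromEdgeSet {s(x, y)}).induce (pathClosure G p)ᶜ)
        ⟨x, fun h => h.1 rfl⟩ ⟨y, fun h => h.2.1 rfl⟩ :=
  ⟨avoidableEdge_of_avoidablePath hp hk, avoidablePath_of_avoidableEdge hp hk⟩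

/-- An induced path `P` on at least 3 vertices with endpoints `x, y` is
avoidable in `G` iff `xy` is an avoidable edge in `G + xy − I[P]`. -/
theorem avoidablePath_iff_avoidableEdge {V : Type*} [Fintype V]
    (G : SimpleGraph V) (x y : V) (p : G.Walk x y)
    (hp : IsInducedPath G p) (hk : 2 ≤ p.length) :
    AvoidablePath G p ↔
      AvoidableEdge
        ((G ⊔ fromEdgeSet {s(x, y)}).induce (pathClosure G p)ᶜ)
        ⟨x, fun h => h.1 rfl⟩ ⟨y, fun h => h.2.1 rfl⟩ :=
  avoidablePath_iff_avoidableEdge_general G x y p hp hk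
end
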